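/- arXiv:2102.05485 — 8 statements merged into one kernel-verified Lean document; each statement's English description precedes it below -/
import Mathlib

section
/- Define Δ(ε) = 1/w₁(ε) - w₁(ε) + 2·log w₁(ε) for ε ≥ 0, where w₁(ε) ∈ (0,1] is the smaller solution of x - log x = 1 + ε. Then Δ(0) = 0, Δ is strictly increasing and strictly convex on (0,∞), with dΔ/dε = 1/w₁(ε) - 1 and d²Δ/dε² = 1/(w₁(ε)(1 - w₁(ε))); consequently Δ(tε) ≤ t·Δ(ε) for all 0 ≤ t ≤ 1 and ε > 0. -/
open Filter Set

private lemma aux_f_anti : StrictAntiOn (fun x : ℝ => x - Real.log x) (Set.Ioc 0 1) := by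
  apply strictAntiOn_of_deriv_neg (convex_Ioc 0 1)
  · exact continuous_id.continuousOn.sub
      (Real.continuousOn_log.mono (fun x hx => ne_of_gt hx.1))
  · intro x hx
    rw [interior_Ioc] at hx
    have hd : HasDerivAt (fun x : ℝ => x - Real.log x) (1 - x⁻¹) x :=
      (hasDerivAt_id x).sub (Real.hasDerivAt_log hx.1.ne')
    rw [hd.deriv]
    have : 1 < x⁻¹ := (one_lt_inv₀ hx.1).mpr hx.2
    linarith

private lemma aux_f_ge {x : ℝ} (hx : 0 < x) : 1 ≤ x - Real.log x := by
  have := Real.log_le_sub_one_of_pos hx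
  linarith

private lemma aux_f_gt {x : ℝ} (hx : 0 < x) (hx1 : x ≠ 1) : 1 < x - Real.log x := by
  have := Real.log_lt_sub_one_of_pos hx hx1
  linarith

/-- Properties of Δ(ε) = 1/w₁(ε) - w₁(ε) + 2 log w₁(ε): Δ(0) = 0, Δ is strictly increasing
and strictly convex on (0,∞), Δ'(ε) = 1/w₁(ε) - 1, Δ''(ε) = 1/(w₁(ε)(1-w₁(ε))), and
Δ(tε) ≤ t·Δ(ε) for 0 ≤ t ≤ 1, ε > 0. -/
theorem stmt9 (w₁ : ℝ → ℝ)
    (hw₁ : ∀ ε, 0 ≤ ε → w₁ ε ∈ Set.Ioc (0 : ℝ) 1 ∧ w₁ ε - Real.log (w₁ ε) = 1 + ε)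
    (Δ : ℝ → ℝ) (hΔ : ∀ ε, Δ ε = 1 / w₁ ε - w₁ ε + 2 * Real.log (w₁ ε)) :
    Δ 0 = 0 ∧
    StrictMonoOn Δ (Set.Ioi 0) ∧
    StrictConvexOn ℝ (Set.Ioi 0) Δ ∧
    (∀ ε : ℝ, 0 < ε → HasDerivAt Δ (1 / w₁ ε - 1) ε) ∧
    (∀ ε : ℝ, 0 < ε →
      HasDerivAt (fun s => 1 / w₁ s - 1) (1 / (w₁ ε * (1 - w₁ ε))) ε) ∧
    (∀ t ε : ℝ, 0 ≤ t → t ≤ 1 → 0 < ε → Δ (t * ε) ≤ t * Δ ε) := by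
  set f : ℝ → ℝ := fun x => x - Real.log x with hfdef
  have hanti : StrictAntiOn f (Set.Ioc 0 1) := aux_f_anti
  have hmem : ∀ ε : ℝ, 0 ≤ ε → w₁ ε ∈ Set.Ioc (0 : ℝ) 1 := fun ε h => (hw₁ ε h).1
  have heq : ∀ ε : ℝ, 0 ≤ ε → f (w₁ ε) = 1 + ε := fun ε h => (hw₁ ε h).2
  have hcomp : ∀ a b : ℝ, a ∈ Set.Ioc (0:ℝ) 1 → b ∈ Set.Ioc (0:ℝ) 1 → f a < f b → b < a := by
    intro a b ha hb h
    by_contra hle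
    push_neg at hle
    rcases eq_or_lt_of_le hle with rfl | hlt
    · exact lt_irrefl _ h
    · exact lt_asymm h (hanti ha hb hlt)
  -- w₁ 0 = 1
  have hw0 : w₁ 0 = 1 := by
    apply hanti.injOn (hmem 0 le_rfl) (by constructor <;> norm_num)
    have h1 := heq 0 le_rfl
    simp only [hfdef, Real.log_one]
    simpa using h1
  have hΔ0 : Δ 0 = 0 := by rw [hΔ, hw0]; norm_num
  -- w₁ ε < 1 for ε > 0
  have hlt1 : ∀ ε : ℝ, 0 < ε → w₁ ε < 1 := by
    intro ε hε
    rcases lt_or_eq_of_le (hmem ε hε.le).2 with h | h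
    · exact h
    · exfalso
      have h1 := heq ε hε.le
      rw [h] at h1
      simp only [hfdef, Real.log_one] at h1
      linarith
  -- continuity of w₁ at ε > 0
  have hcont : ∀ ε : ℝ, 0 < ε → ContinuousAt w₁ ε := by
    intro ε hε
    have hx := hmem ε hε.le
    have hx1 : w₁ ε < 1 := hlt1 ε hε
    rw [Metric.continuousAt_iff]
    intro η hη
    set x₀ := w₁ ε with hx₀
    set η' := min η (min x₀ (1 - x₀)) / 2 with hη'def
    have hη'pos : 0 < η' := by
      apply div_pos _ two_pos
      exact lt_min hη (lt_min hx.1 (by linarith))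
    have hminη : min η (min x₀ (1 - x₀)) ≤ η := min_le_left _ _
    have hminx : min η (min x₀ (1 - x₀)) ≤ x₀ :=
      (min_le_right _ _).trans (min_le_left _ _)
    have hminx1 : min η (min x₀ (1 - x₀)) ≤ 1 - x₀ :=
      (min_le_right _ _).trans (min_le_right _ _)
    have hη'x : η' < x₀ := by rw [hη'def]; linarith [hx.1]
    have hη'x1 : x₀ + η' < 1 := by rw [hη'def]; linarith
    have hη'η : η' ≤ η := by rw [hη'def]; linarith
    have hamem : x₀ - η' ∈ Set.Ioc (0:ℝ) 1 := ⟨by linarith, by linarith⟩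
    have hbmem : x₀ + η' ∈ Set.Ioc (0:ℝ) 1 := ⟨by linarith [hx.1], by linarith⟩
    have hfb : f (x₀ + η') < 1 + ε := by
      rw [← heq ε hε.le]
      exact hanti hx hbmem (by linarith)
    have hfa : 1 + ε < f (x₀ - η') := by
      rw [← heq ε hε.le]
      exact hanti hamem hx (by linarith)
    refine ⟨min ((1 + ε) - f (x₀ + η')) (f (x₀ - η') - (1 + ε)), by
      apply lt_min <;> linarith, ?_⟩
    intro ε' hdist
    rw [Real.dist_eq] at hdist
    have hd1 : |ε' - ε| < (1 + ε) - f (x₀ + η') := lt_of_lt_of_le hdist (min_le_left _ _)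
    have hd2 : |ε' - ε| < f (x₀ - η') - (1 + ε) := lt_of_lt_of_le hdist (min_le_right _ _)
    rw [abs_sub_lt_iff] at hd1 hd2
    have hε'lb : f (x₀ + η') < 1 + ε' := by linarith [hd1.2]
    have hε'ub : 1 + ε' < f (x₀ - η') := by linarith [hd2.1]
    have hε'0 : 0 ≤ ε' := by
      have := aux_f_ge hbmem.1
      simp only [hfdef] at this hε'lb ⊢
      linarith
    have hw' := hmem ε' hε'0
    have hfw' : f (w₁ ε') = 1 + ε' := heq ε' hε'0
    have h1 : x₀ - η' < w₁ ε' := by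
      apply hcomp _ _ hw' hamem
      rw [hfw']; exact hε'ub
    have h2 : w₁ ε' < x₀ + η' := by
      apply hcomp _ _ hbmem hw'
      rw [hfw']; exact hε'lb
    rw [Real.dist_eq, abs_sub_lt_iff]
    constructor <;> linarith
  -- derivative of w₁
  have hwd : ∀ ε : ℝ, 0 < ε → HasDerivAt w₁ (w₁ ε / (w₁ ε - 1)) ε := by
    intro ε hε
    have hx := hmem ε hε.le
    have hx1 : w₁ ε < 1 := hlt1 ε hε
    have hF : HasDerivAt (fun x => x - Real.log x - 1) (1 - (w₁ ε)⁻¹) (w₁ ε) :=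
      ((hasDerivAt_id _).sub (Real.hasDerivAt_log hx.1.ne')).sub_const 1
    have hne : (1 - (w₁ ε)⁻¹) ≠ 0 := by
      have : 1 < (w₁ ε)⁻¹ := (one_lt_inv₀ hx.1).mpr hx1
      linarith
    have hfg : ∀ᶠ y in nhds ε, (fun x => x - Real.log x - 1) (w₁ y) = y := by
      filter_upwards [isOpen_Ioi.eventually_mem (show ε ∈ Set.Ioi (0:ℝ) from hε)] with y hy
      have := heq y (le_of_lt hy)
      simp only [hfdef] at this
      show w₁ y - Real.log (w₁ y) - 1 = y
      linarith
    have h := HasDerivAt.of_local_left_inverse (hcont ε hε) hF hne hfg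
    convert (show HasDerivAt w₁ _ ε from h) using 1
    have hne0 : w₁ ε ≠ 0 := hx.1.ne'
    have hne1 : w₁ ε - 1 ≠ 0 := by intro h'; apply absurd hx1; simp [sub_eq_zero.mp h']
    field_simp
  -- derivative of Δ
  have hΔd : ∀ ε : ℝ, 0 < ε → HasDerivAt Δ (1 / w₁ ε - 1) ε := by
    intro ε hε
    have hx := hmem ε hε.le
    have hx1 : w₁ ε < 1 := hlt1 ε hε
    have hne0 : w₁ ε ≠ 0 := hx.1.ne'
    have hne1 : w₁ ε - 1 ≠ 0 := by intro h'; apply absurd hx1; simp [sub_eq_zero.mp h']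
    have hw := hwd ε hε
    have h1 : HasDerivAt (fun s => (w₁ s)⁻¹) (-(w₁ ε / (w₁ ε - 1)) / (w₁ ε) ^ 2) ε :=
      hw.inv hne0
    have h2 : HasDerivAt (fun s => Real.log (w₁ s)) ((w₁ ε)⁻¹ * (w₁ ε / (w₁ ε - 1))) ε := by
      have := (Real.hasDerivAt_log hne0).comp ε hw
      exact this
    have h3 := (h1.sub hw).add (h2.const_mul 2)
    have hfun : Δ = fun s => (w₁ s)⁻¹ - w₁ s + 2 * Real.log (w₁ s) := by
      funext s; rw [hΔ s, one_div]
    rw [hfun]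
    convert (show HasDerivAt (fun s => (w₁ s)⁻¹ - w₁ s + 2 * Real.log (w₁ s)) _ ε from h3) using 1
    field_simp
    ring
  -- second derivative
  have hΔd2 : ∀ ε : ℝ, 0 < ε →
      HasDerivAt (fun s => 1 / w₁ s - 1) (1 / (w₁ ε * (1 - w₁ ε))) ε := by
    intro ε hε
    have hx := hmem ε hε.le
    have hx1 : w₁ ε < 1 := hlt1 ε hε
    have hne0 : w₁ ε ≠ 0 := hx.1.ne'
    have hne1 : w₁ ε - 1 ≠ 0 := by intro h'; apply absurd hx1; simp [sub_eq_zero.mp h']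
    have hne1' : 1 - w₁ ε ≠ 0 := by intro h'; apply hne1; linarith [sub_eq_zero.mp h']
    have hw := hwd ε hε
    have h1 : HasDerivAt (fun s => (w₁ s)⁻¹ - 1) (-(w₁ ε / (w₁ ε - 1)) / (w₁ ε) ^ 2) ε :=
      (hw.inv hne0).sub_const 1
    have : (fun s => 1 / w₁ s - 1) = fun s => (w₁ s)⁻¹ - 1 := by
      funext s; rw [one_div]
    rw [this]
    convert h1 using 1
    field_simp
    ring
  -- positivity of Δ'
  have hpos : ∀ x : ℝ, 0 < x → 0 < 1 / w₁ x - 1 := by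
    intro x hx
    have hm := hmem x hx.le
    have : 1 < 1 / w₁ x := by
      rw [lt_div_iff₀ hm.1]
      linarith [hlt1 x hx]
    linarith
  -- strict monotone
  have hmono : StrictMonoOn Δ (Set.Ioi 0) := by
    apply strictMonoOn_of_deriv_pos (convex_Ioi 0)
    · intro x hx
      exact (hΔd x hx).continuousAt.continuousWithinAt
    · intro x hx
      rw [interior_Ioi] at hx
      rw [(hΔd x hx).deriv]
      exact hpos x hx
  -- strict convex
  have hmono' : StrictMonoOn (fun s => 1 / w₁ s - 1) (Set.Ioi 0) := by
    apply strictMonoOn_of_deriv_pos (convex_Ioi 0)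
    · intro x hx
      exact (hΔd2 x hx).continuousAt.continuousWithinAt
    · intro x hx
      rw [interior_Ioi] at hx
      rw [(hΔd2 x hx).deriv]
      have hm := hmem x hx.le
      have h1 := hlt1 x hx
      have h2 : 0 < 1 - w₁ x := by linarith
      have h3 : 0 < w₁ x := hm.1
      positivity
  have hconv : StrictConvexOn ℝ (Set.Ioi 0) Δ := by
    apply StrictMonoOn.strictConvexOn_of_deriv (convex_Ioi 0)
    · intro x hx
      exact (hΔd x hx).continuousAt.continuousWithinAt
    · rw [interior_Ioi]
      intro a ha b hb hab
      rw [(hΔd a ha).deriv, (hΔd b hb).deriv]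
      exact hmono' ha hb hab
  -- tendsto of w₁ at zero from the right
  have hw0t : Tendsto w₁ (nhdsWithin 0 (Set.Ioi 0)) (nhds 1) := by
    rw [Metric.tendsto_nhdsWithin_nhds]
    intro η hη
    set a : ℝ := 1 - min η 1 / 2 with hadef
    have ha0 : 0 < a := by
      have : min η 1 ≤ 1 := min_le_right _ _
      rw [hadef]; linarith
    have hmin : 0 < min η 1 := lt_min hη one_pos
    have ha1 : a < 1 := by rw [hadef]; linarith
    have hfa : 1 < f a := aux_f_gt ha0 (ne_of_lt ha1)
    refine ⟨f a - 1, by linarith, ?_⟩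
    intro x hx hdist
    have hx0 : 0 < x := hx
    rw [Real.dist_eq, sub_zero, abs_of_pos hx0] at hdist
    have hflt : f (w₁ x) < f a := by
      rw [heq x hx0.le]; linarith
    have hagt : a < w₁ x := hcomp _ _ (hmem x hx0.le) ⟨ha0, ha1.le⟩ hflt
    have hle1 : w₁ x ≤ 1 := (hmem x hx0.le).2
    rw [Real.dist_eq, abs_sub_lt_iff]
    constructor
    · linarith
    · have : min η 1 ≤ η := min_le_left _ _
      rw [hadef] at hagt
      linarith
  -- tendsto of Δ at zero from the right
  have hΔt : Tendsto Δ (nhdsWithin 0 (Set.Ioi 0)) (nhds 0) := by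
    have hG : ContinuousAt (fun x : ℝ => 1 / x - x + 2 * Real.log x) 1 := by
      apply ContinuousAt.add
      · exact (continuousAt_const.div continuousAt_id one_ne_zero).sub continuousAt_id
      · exact (Real.continuousAt_log one_ne_zero).const_mul 2
    have := hG.tendsto.comp hw0t
    have heq2 : Δ = fun x => (fun y : ℝ => 1 / y - y + 2 * Real.log y) (w₁ x) := by
      funext x; exact hΔ x
    rw [heq2]
    convert this using 2
    norm_num
    norm_num
  refine ⟨hΔ0, hmono, hconv, hΔd, hΔd2, ?_⟩
  -- the scaling inequality
  intro t ε ht0 ht1 hε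
  rcases eq_or_lt_of_le ht0 with rfl | ht0'
  · simp [hΔ0]
  rcases eq_or_lt_of_le ht1 with rfl | ht1'
  · simp
  have hconv' : ConvexOn ℝ (Set.Ioi 0) Δ := hconv.convexOn
  have htε : 0 < t * ε := mul_pos ht0' hε
  have htεε : t * ε < ε := by nlinarith
  have hlim : Tendsto (fun δ => ((ε - t*ε)/(ε - δ)) * Δ δ + ((t*ε - δ)/(ε - δ)) * Δ ε)
      (nhdsWithin 0 (Set.Ioi 0)) (nhds (t * Δ ε)) := by
    have h1 : Tendsto (fun δ : ℝ => ε - δ) (nhdsWithin 0 (Set.Ioi 0)) (nhds ε) := by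
      have hc : Tendsto (fun δ : ℝ => ε - δ) (nhds 0) (nhds (ε - 0)) :=
        (continuous_const.sub continuous_id).tendsto 0
      rw [sub_zero] at hc
      exact hc.mono_left nhdsWithin_le_nhds
    have h2 : Tendsto (fun δ : ℝ => (ε - t*ε)/(ε - δ)) (nhdsWithin 0 (Set.Ioi 0))
        (nhds ((ε - t*ε)/ε)) := tendsto_const_nhds.div h1 hε.ne'
    have hnum : Tendsto (fun δ : ℝ => t*ε - δ) (nhdsWithin 0 (Set.Ioi 0)) (nhds (t*ε)) := by
      have hc : Tendsto (fun δ : ℝ => t*ε - δ) (nhds 0) (nhds (t*ε - 0)) :=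
        (continuous_const.sub continuous_id).tendsto 0
      rw [sub_zero] at hc
      exact hc.mono_left nhdsWithin_le_nhds
    have h3 : Tendsto (fun δ : ℝ => (t*ε - δ)/(ε - δ)) (nhdsWithin 0 (Set.Ioi 0))
        (nhds ((t*ε)/ε)) := hnum.div h1 hε.ne'
    have h4 := (h2.mul hΔt).add (h3.mul (tendsto_const_nhds (x := Δ ε)))
    convert h4 using 1
    rw [mul_zero, zero_add]
    field_simp
  have hev : ∀ᶠ δ in nhdsWithin 0 (Set.Ioi 0),
      Δ (t * ε) ≤ ((ε - t*ε)/(ε - δ)) * Δ δ + ((t*ε - δ)/(ε - δ)) * Δ ε := by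
    filter_upwards [Ioo_mem_nhdsGT_of_mem (Set.mem_Ico.mpr ⟨le_rfl, htε⟩)] with δ hδ
    obtain ⟨hδ0, hδtε⟩ := hδ
    have hεδ : 0 < ε - δ := by linarith
    have ha : (0:ℝ) ≤ (ε - t*ε)/(ε - δ) := div_nonneg (by linarith) hεδ.le
    have hb : (0:ℝ) ≤ (t*ε - δ)/(ε - δ) := div_nonneg (by linarith) hεδ.le
    have hab : (ε - t*ε)/(ε - δ) + (t*ε - δ)/(ε - δ) = 1 := by
      field_simp
      ring
    have key := hconv'.2 (show δ ∈ Set.Ioi (0:ℝ) from hδ0)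
      (show ε ∈ Set.Ioi (0:ℝ) from hε) ha hb hab
    rw [smul_eq_mul, smul_eq_mul, smul_eq_mul, smul_eq_mul] at key
    have harg : (ε - t*ε)/(ε - δ) * δ + (t*ε - δ)/(ε - δ) * ε = t * ε := by
      field_simp
      ring
    rwa [harg] at key
  exact ge_of_tendsto hlim hev
end

section
/- Let n ≥ 1 and x₁,…,xₙ > 0 satisfy Σᵢ (xᵢ - log xᵢ) ≤ n + ε for some ε > 0. Then Σᵢ (1/xᵢ - log(1/xᵢ)) ≤ 1/w₁(ε) - log(1/w₁(ε)) + n - 1, where w₁(ε) ∈ (0,1) is the smaller solution of x - log x = 1 + ε, and this bound is attained (so it is the supremum) when exactly one xⱼ satisfies xⱼ - log xⱼ = 1 + ε with xⱼ = w₁(ε) and all other xᵢ = 1. -/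
open Real

private lemma hasDerivAt_psi (C : ℝ) {x : ℝ} (hx : 0 < x) :
    HasDerivAt (fun y => C*(y - Real.log y - 1) - (1/y + Real.log y - 1))
      ((x-1)*(C*x-1)/x^2) x := by
  have h1 : HasDerivAt Real.log x⁻¹ x := Real.hasDerivAt_log hx.ne'
  have h2 : HasDerivAt (fun y : ℝ => 1/y) (-(x^2)⁻¹) x := by
    simpa [one_div] using hasDerivAt_inv hx.ne'
  have h3 := ((((hasDerivAt_id x).sub h1).sub_const 1).const_mul C).sub
    ((h2.add h1).sub_const 1)
  have he : (x-1)*(C*x-1)/x^2 = C * ((1:ℝ) - x⁻¹) - (-(x^2)⁻¹ + x⁻¹) := by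
    field_simp
    ring
  rw [he]
  exact h3

private lemma psi_nonneg {C w : ℝ} (hw0 : 0 < w) (hC1 : 1 ≤ C) (hCw : C * w ≤ 1)
    (hpw : 0 ≤ C*(w - Real.log w - 1) - (1/w + Real.log w - 1)) :
    ∀ x, w ≤ x → 1/x + Real.log x - 1 ≤ C*(x - Real.log x - 1) := by
  intro x hx
  set ψ : ℝ → ℝ := fun y => C*(y - Real.log y - 1) - (1/y + Real.log y - 1) with hψdef
  have hC0 : (0:ℝ) < C := lt_of_lt_of_le one_pos hC1
  have hC0' : (0:ℝ) < 1/C := by positivity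
  have hwC : w ≤ 1/C := (le_div_iff₀ hC0).2 (by linarith [mul_comm C w])
  have hC1' : 1/C ≤ 1 := by rw [div_le_one hC0]; exact hC1
  have hx0 : 0 < x := lt_of_lt_of_le hw0 hx
  have hdiff : ∀ s : Set ℝ, s ⊆ Set.Ioi 0 → DifferentiableOn ℝ ψ s := fun s hs y hy =>
    ((hasDerivAt_psi C (hs hy)).differentiableAt).differentiableWithinAt
  have hderiv : ∀ y : ℝ, 0 < y → deriv ψ y = (y-1)*(C*y-1)/y^2 := fun y hy =>
    (hasDerivAt_psi C hy).deriv
  have hψ1 : ψ 1 = 0 := by simp [hψdef]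
  have hψw : 0 ≤ ψ w := hpw
  have hgoal : 0 ≤ ψ x := by
    rcases le_total x (1/C) with h1 | h1
    · have hmono : MonotoneOn ψ (Set.Icc w (1/C)) := by
        apply monotoneOn_of_deriv_nonneg (convex_Icc _ _)
        · exact (hdiff _ fun y hy => Set.mem_Ioi.mpr (lt_of_lt_of_le hw0 hy.1)).continuousOn
        · rw [interior_Icc]
          exact hdiff _ fun y hy => Set.mem_Ioi.mpr (lt_trans hw0 hy.1)
        · intro y hy
          rw [interior_Icc] at hy
          have hy0 : 0 < y := lt_trans hw0 hy.1
          rw [hderiv y hy0]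
          have h2 : C * y ≤ 1 := by
            have := (le_div_iff₀ hC0).1 hy.2.le
            linarith [mul_comm y C]
          have h3 : y ≤ 1 := le_trans hy.2.le hC1'
          have h4 : 0 ≤ (y-1)*(C*y-1) := by nlinarith
          positivity
      have := hmono (Set.mem_Icc.2 ⟨le_refl w, hwC⟩) (Set.mem_Icc.2 ⟨hx, h1⟩) hx
      linarith
    · rcases le_total x 1 with h2 | h2
      · have hanti : AntitoneOn ψ (Set.Icc (1/C) 1) := by
          apply antitoneOn_of_deriv_nonpos (convex_Icc _ _)
          · exact (hdiff _ fun y hy => Set.mem_Ioi.mpr (lt_of_lt_of_le hC0' hy.1)).continuousOn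
          · rw [interior_Icc]
            exact hdiff _ fun y hy => Set.mem_Ioi.mpr (lt_trans hC0' hy.1)
          · intro y hy
            rw [interior_Icc] at hy
            have hy0 : 0 < y := lt_trans hC0' hy.1
            rw [hderiv y hy0]
            have h3 : 1 ≤ C * y := by
              have := (div_le_iff₀ hC0).1 hy.1.le
              linarith [mul_comm y C]
            apply div_nonpos_of_nonpos_of_nonneg
            · nlinarith [hy.2]
            · positivity
        have := hanti (Set.mem_Icc.2 ⟨h1, h2⟩) (Set.mem_Icc.2 ⟨hC1', le_refl 1⟩) h2
        linarith
      · have hmono : MonotoneOn ψ (Set.Icc 1 x) := by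
          apply monotoneOn_of_deriv_nonneg (convex_Icc _ _)
          · exact (hdiff _ fun y hy => Set.mem_Ioi.mpr (lt_of_lt_of_le one_pos hy.1)).continuousOn
          · rw [interior_Icc]
            exact hdiff _ fun y hy => Set.mem_Ioi.mpr (lt_trans one_pos hy.1)
          · intro y hy
            rw [interior_Icc] at hy
            have hy0 : 0 < y := lt_trans one_pos hy.1
            rw [hderiv y hy0]
            have h3 : 1 ≤ C * y := by nlinarith [hy.1]
            have h4 : 0 ≤ (y-1)*(C*y-1) := mul_nonneg (by linarith [hy.1]) (by linarith)
            positivity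
        have := hmono (Set.mem_Icc.2 ⟨le_refl 1, h2⟩) (Set.mem_Icc.2 ⟨h2, le_refl x⟩) h2
        linarith
  have hgoal' : 0 ≤ C*(x - Real.log x - 1) - (1/x + Real.log x - 1) := hgoal
  linarith

private lemma lemB {w : ℝ} (hw0 : 0 < w) (hw1 : w ≤ 1) : 0 ≤ 1/w - w + 2*Real.log w := by
  set h : ℝ → ℝ := fun y => 1/y - y + 2*Real.log y with hhdef
  have hder : ∀ y : ℝ, 0 < y → HasDerivAt h (-((y-1)^2/y^2)) y := by
    intro y hy
    have h1 : HasDerivAt Real.log y⁻¹ y := Real.hasDerivAt_log hy.ne'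
    have h2 : HasDerivAt (fun z : ℝ => 1/z) (-(y^2)⁻¹) y := by
      simpa [one_div] using hasDerivAt_inv hy.ne'
    have h3 := (h2.sub (hasDerivAt_id y)).add (h1.const_mul 2)
    have he : -((y-1)^2/y^2) = -(y^2)⁻¹ - 1 + 2*y⁻¹ := by
      field_simp
      ring
    rw [he]
    exact h3
  have hanti : AntitoneOn h (Set.Icc w 1) := by
    apply antitoneOn_of_deriv_nonpos (convex_Icc _ _)
    · exact HasDerivAt.continuousOn fun y hy => hder y (lt_of_lt_of_le hw0 hy.1)
    · rw [interior_Icc]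
      exact fun y hy => ((hder y (lt_trans hw0 hy.1)).differentiableAt).differentiableWithinAt
    · intro y hy
      rw [interior_Icc] at hy
      have hy0 : 0 < y := lt_trans hw0 hy.1
      rw [(hder y hy0).deriv]
      have : 0 ≤ (y-1)^2/y^2 := by positivity
      linarith
  have h1 : h 1 = 0 := by simp [hhdef]
  have h2 := hanti (Set.mem_Icc.2 ⟨le_refl w, hw1⟩) (Set.mem_Icc.2 ⟨hw1, le_refl 1⟩) hw1
  rw [h1] at h2
  exact h2

private lemma lemC {w : ℝ} (hw0 : 0 < w) (hw1 : w ≤ 1) : (w+1)*Real.log w ≤ 2*(w-1) := by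
  set k : ℝ → ℝ := fun y => (y+1)*Real.log y - 2*(y-1) with hkdef
  have hder : ∀ y : ℝ, 0 < y → HasDerivAt k (Real.log y + 1/y - 1) y := by
    intro y hy
    have h1 : HasDerivAt Real.log y⁻¹ y := Real.hasDerivAt_log hy.ne'
    have h2 : HasDerivAt (fun z : ℝ => (z+1)*Real.log z) (1*Real.log y + (y+1)*y⁻¹) y :=
      ((hasDerivAt_id y).add_const 1).mul h1
    have h3 := h2.sub (((hasDerivAt_id y).sub_const 1).const_mul 2)
    have he : Real.log y + 1/y - 1 = 1*Real.log y + (y+1)*y⁻¹ - 2*1 := by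
      field_simp
      ring
    rw [he]
    exact h3
  have hmono : MonotoneOn k (Set.Icc w 1) := by
    apply monotoneOn_of_deriv_nonneg (convex_Icc _ _)
    · exact HasDerivAt.continuousOn fun y hy => hder y (lt_of_lt_of_le hw0 hy.1)
    · rw [interior_Icc]
      exact fun y hy => ((hder y (lt_trans hw0 hy.1)).differentiableAt).differentiableWithinAt
    · intro y hy
      rw [interior_Icc] at hy
      have hy0 : 0 < y := lt_trans hw0 hy.1
      rw [(hder y hy0).deriv]
      have hinv : 0 < 1/y := by positivity
      have := Real.log_le_sub_one_of_pos hinv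
      rw [Real.log_div one_ne_zero hy0.ne', Real.log_one] at this
      linarith
  have h1 : k 1 = 0 := by simp [hkdef]
  have h2 := hmono (Set.mem_Icc.2 ⟨le_refl w, hw1⟩) (Set.mem_Icc.2 ⟨hw1, le_refl 1⟩) hw1
  rw [h1] at h2
  have h3 : (w+1)*Real.log w - 2*(w-1) ≤ 0 := h2
  linarith

/-- If Σᵢ(xᵢ - log xᵢ) ≤ n + ε with all xᵢ > 0, then
Σᵢ(1/xᵢ - log(1/xᵢ)) ≤ 1/w₁(ε) - log(1/w₁(ε)) + n - 1, and the bound is attained when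
exactly one coordinate equals w₁(ε) and the others equal 1. -/
theorem stmt10 (n : ℕ) (hn : 1 ≤ n) (ε w₁ : ℝ) (hε : 0 < ε)
    (hw₁ : w₁ ∈ Set.Ioo (0 : ℝ) 1) (hw₁f : w₁ - Real.log w₁ = 1 + ε) :
    (∀ x : Fin n → ℝ, (∀ i, 0 < x i) →
      (∑ i, (x i - Real.log (x i))) ≤ n + ε →
      (∑ i, (1 / x i - Real.log (1 / x i))) ≤ 1 / w₁ - Real.log (1 / w₁) + n - 1) ∧
    (∀ j : Fin n,
      (∀ i, 0 < Function.update (fun _ : Fin n => (1 : ℝ)) j w₁ i) ∧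
      (∑ i, (Function.update (fun _ : Fin n => (1 : ℝ)) j w₁ i -
          Real.log (Function.update (fun _ : Fin n => (1 : ℝ)) j w₁ i))) ≤ n + ε ∧
      (∑ i, (1 / Function.update (fun _ : Fin n => (1 : ℝ)) j w₁ i -
          Real.log (1 / Function.update (fun _ : Fin n => (1 : ℝ)) j w₁ i))) =
        1 / w₁ - Real.log (1 / w₁) + n - 1) := by
  obtain ⟨hw0, hw1⟩ := hw₁
  constructor
  · intro x hxpos hsum
    set C := (1/w₁ + Real.log w₁ - 1)/ε with hCdef
    have hεval : ε = w₁ - Real.log w₁ - 1 := by linarith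
    have hB := lemB hw0 hw1.le
    have hC := lemC hw0 hw1.le
    have hC1 : 1 ≤ C := by
      rw [hCdef, le_div_iff₀ hε]
      linarith
    have hC0 : (0:ℝ) < C := lt_of_lt_of_le one_pos hC1
    have hCw : C * w₁ ≤ 1 := by
      rw [hCdef, div_mul_eq_mul_div, div_le_one hε]
      have hexp : (1/w₁ + Real.log w₁ - 1)*w₁ = 1 + w₁*Real.log w₁ - w₁ := by
        field_simp
      rw [hexp]
      nlinarith
    have hCε : C * ε = 1/w₁ + Real.log w₁ - 1 := div_mul_cancel₀ _ hε.ne'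
    have hpw : 0 ≤ C*(w₁ - Real.log w₁ - 1) - (1/w₁ + Real.log w₁ - 1) := by
      rw [← hεval, hCε]
      linarith
    -- each f(x i) ≥ 1
    have hf1 : ∀ i, 1 ≤ x i - Real.log (x i) := by
      intro i
      have := Real.log_le_sub_one_of_pos (hxpos i)
      linarith
    have hsum_sub : ∑ i, ((x i - Real.log (x i)) - 1) = (∑ i, (x i - Real.log (x i))) - n := by
      rw [Finset.sum_sub_distrib, Finset.sum_const, Finset.card_univ, Fintype.card_fin]
      simp
    have hfle : ∀ i, x i - Real.log (x i) ≤ 1 + ε := by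
      intro i
      have key : (x i - Real.log (x i)) - 1 ≤ ∑ j, ((x j - Real.log (x j)) - 1) :=
        Finset.single_le_sum (f := fun j => x j - Real.log (x j) - 1)
          (fun j _ => show (0:ℝ) ≤ x j - Real.log (x j) - 1 by linarith [hf1 j]) (Finset.mem_univ i)
      rw [hsum_sub] at key
      linarith
    -- each x i ≥ w₁
    have hxw : ∀ i, w₁ ≤ x i := by
      intro i
      by_contra hcon
      push_neg at hcon
      have hne : x i / w₁ ≠ 1 := by
        intro hq
        rw [div_eq_one_iff_eq hw0.ne'] at hq
        exact absurd hq (ne_of_lt hcon)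
      have hlt : Real.log (x i / w₁) < x i / w₁ - 1 :=
        Real.log_lt_sub_one_of_pos (div_pos (hxpos i) hw0) hne
      rw [Real.log_div (hxpos i).ne' hw0.ne'] at hlt
      have hmul := mul_lt_mul_of_pos_left hlt hw0
      have hexp : w₁ * (x i / w₁ - 1) = x i - w₁ := by
        field_simp
      rw [hexp] at hmul
      -- hmul : w₁ * (log (x i) - log w₁) < x i - w₁
      have hfi := hfle i
      nlinarith [mul_pos (sub_pos.2 hcon) (sub_pos.2 hw1)]
    -- pointwise bound
    have hpoint : ∀ i, 1/(x i) + Real.log (x i) - 1 ≤ C*((x i) - Real.log (x i) - 1) :=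
      fun i => psi_nonneg hw0 hC1 hCw hpw (x i) (hxw i)
    have hsum2 : ∑ i, (1/(x i) + Real.log (x i) - 1) ≤ C * ε := by
      calc ∑ i, (1/(x i) + Real.log (x i) - 1)
          ≤ ∑ i, C*((x i) - Real.log (x i) - 1) := Finset.sum_le_sum fun i _ => hpoint i
        _ = C * ∑ i, ((x i) - Real.log (x i) - 1) := by rw [Finset.mul_sum]
        _ ≤ C * ε := by
            apply mul_le_mul_of_nonneg_left _ hC0.le
            rw [show (fun i => x i - Real.log (x i) - 1) = fun i => (x i - Real.log (x i)) - 1 from rfl]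
            rw [hsum_sub]
            linarith
    have hrw : ∀ i, 1/(x i) - Real.log (1/(x i)) = (1/(x i) + Real.log (x i) - 1) + 1 := by
      intro i
      rw [one_div, Real.log_inv]
      ring
    have hsumrw : ∑ i, (1/(x i) - Real.log (1/(x i)))
        = (∑ i, (1/(x i) + Real.log (x i) - 1)) + n := by
      rw [Finset.sum_congr rfl fun i _ => hrw i, Finset.sum_add_distrib, Finset.sum_const,
        Finset.card_univ, Fintype.card_fin]
      simp
    rw [hsumrw, one_div w₁, Real.log_inv]
    rw [one_div] at hCε
    linarith
  · intro j
    set u := Function.update (fun _ : Fin n => (1:ℝ)) j w₁ with hu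
    have hupos : ∀ i, 0 < u i := by
      intro i
      by_cases hi : i = j
      · rw [hu, hi, Function.update_self]
        exact hw0
      · rw [hu, Function.update_of_ne hi]
        exact one_pos
    have key : ∀ g : ℝ → ℝ, ∑ i, g (u i) = g w₁ + ((n:ℝ) - 1) * g 1 := by
      intro g
      have h1 : ∀ i, g (u i) = Function.update (fun _ : Fin n => g 1) j (g w₁) i := by
        intro i
        by_cases hi : i = j
        · rw [hu, hi, Function.update_self, Function.update_self]
        · rw [hu, Function.update_of_ne hi, Function.update_of_ne hi]
      rw [Finset.sum_congr rfl fun i _ => h1 i,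
        Finset.sum_update_of_mem (Finset.mem_univ j), Finset.sum_const]
      have hcard : (Finset.univ \ {j}).card = n - 1 := by
        rw [Finset.card_sdiff_of_subset (Finset.singleton_subset_iff.2 (Finset.mem_univ j)),
          Finset.card_univ, Fintype.card_fin, Finset.card_singleton]
      rw [hcard, nsmul_eq_mul, Nat.cast_sub hn, Nat.cast_one]
    refine ⟨hupos, ?_, ?_⟩
    · have h2 := key (fun t => t - Real.log t)
      rw [h2, Real.log_one]
      rw [hw₁f]
      ring_nf
      linarith
    · have h2 := key (fun t => 1/t - Real.log (1/t))
      rw [h2]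
      norm_num
      ring
end

section
/- Let n ≥ 1 and x₁,…,xₙ > 0 satisfy Σᵢ (xᵢ - log xᵢ) ≥ n + M for some M > 0. Then Σᵢ (1/xᵢ - log(1/xᵢ)) ≥ 1/w₂(M) - log(1/w₂(M)) + n - 1, where w₂(M) ∈ (1,∞) is the larger solution of x - log x = 1 + M. -/
open Real

/-- derivative of `s ↦ s - 1/s - 2 log s`. -/
private lemma hasDerivAt_aux1 (t : ℝ) (ht : 0 < t) :
    HasDerivAt (fun s : ℝ => s - 1/s - 2 * Real.log s) (1 + 1/t^2 - 2/t) t := by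
  have h2 : HasDerivAt (fun s : ℝ => 1/s) (-(1/t^2)) t := by
    simpa [one_div] using (hasDerivAt_inv ht.ne')
  have h3 : HasDerivAt (fun s : ℝ => 2 * Real.log s) (2 * (1/t)) t := by
    simpa [one_div] using (Real.hasDerivAt_log ht.ne').const_mul 2
  have : HasDerivAt (fun s : ℝ => s - 1/s - 2 * Real.log s) (1 - -(1/t^2) - 2*(1/t)) t :=
    ((hasDerivAt_id t).sub h2).sub h3
  convert this using 1 <;> ring

private lemma two_log_le {y : ℝ} (hy : 1 ≤ y) : 2 * Real.log y ≤ y - 1/y := by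
  have key : MonotoneOn (fun s : ℝ => s - 1/s - 2 * Real.log s) (Set.Ici 1) := by
    apply monotoneOn_of_deriv_nonneg (convex_Ici 1)
    · intro t ht
      have ht0 : (0:ℝ) < t := lt_of_lt_of_le one_pos ht
      exact (hasDerivAt_aux1 t ht0).continuousAt.continuousWithinAt
    · intro t ht
      have ht1 : (1:ℝ) < t := by simpa [interior_Ici] using ht
      exact (hasDerivAt_aux1 t (by linarith)).differentiableAt.differentiableWithinAt
    · intro t ht
      have ht1 : (1:ℝ) < t := by simpa [interior_Ici] using ht
      have ht0 : (0:ℝ) < t := by linarith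
      rw [(hasDerivAt_aux1 t ht0).deriv]
      have heq : (1:ℝ) + 1/t^2 - 2/t = (t-1)^2/t^2 := by field_simp; ring
      rw [heq]
      positivity
  have h := key (Set.self_mem_Ici) (show y ∈ Set.Ici (1:ℝ) from hy) hy
  simp only [Real.log_one] at h
  norm_num at h
  rw [one_div]
  linarith

/-- g(x) = 1/x + log x ≥ 1 for x > 0 -/
private lemma g_ge_one {t : ℝ} (ht : 0 < t) : 1 ≤ 1/t + Real.log t := by
  have := Real.log_le_sub_one_of_pos (show (0:ℝ) < 1/t by positivity)
  rw [one_div, Real.log_inv] at this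
  rw [one_div]
  linarith

/-- f(x) = x - log x ≥ 1 for x > 0 -/
private lemma f_ge_one {t : ℝ} (ht : 0 < t) : 1 ≤ t - Real.log t := by
  have := Real.log_le_sub_one_of_pos ht
  linarith

/-- g is monotone on [1, ∞) -/
private lemma g_mono : MonotoneOn (fun s : ℝ => 1/s + Real.log s) (Set.Ici 1) := by
  apply monotoneOn_of_deriv_nonneg (convex_Ici 1)
  · intro t ht
    have ht0 : (0:ℝ) < t := lt_of_lt_of_le one_pos ht
    have h2 : HasDerivAt (fun s : ℝ => 1/s + Real.log s) (-(1/t^2) + 1/t) t := by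
      have := HasDerivAt.add (by simpa [one_div] using (hasDerivAt_inv ht0.ne'))
        (Real.hasDerivAt_log ht0.ne')
      simpa [Pi.add_def] using this
    exact h2.continuousAt.continuousWithinAt
  · intro t ht
    have ht1 : (1:ℝ) < t := by simpa [interior_Ici] using ht
    have ht0 : (0:ℝ) < t := by linarith
    have h2 : HasDerivAt (fun s : ℝ => 1/s + Real.log s) (-(1/t^2) + 1/t) t := by
      have := HasDerivAt.add (by simpa [one_div] using (hasDerivAt_inv ht0.ne'))
        (Real.hasDerivAt_log ht0.ne')
      simpa [Pi.add_def] using this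
    exact h2.differentiableAt.differentiableWithinAt
  · intro t ht
    have ht1 : (1:ℝ) < t := by simpa [interior_Ici] using ht
    have ht0 : (0:ℝ) < t := by linarith
    have h2 : HasDerivAt (fun s : ℝ => 1/s + Real.log s) (-(1/t^2) + 1/t) t := by
      have := HasDerivAt.add (by simpa [one_div] using (hasDerivAt_inv ht0.ne'))
        (Real.hasDerivAt_log ht0.ne')
      simpa [Pi.add_def] using this
    rw [h2.deriv]
    have h3 : (0:ℝ) < t^2 := by positivity
    rw [← sub_nonneg]
    have : -(1/t^2) + 1/t - 0 = (t-1)/t^2 := by field_simp; ring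
    rw [this]
    exact div_nonneg (by linarith) (by positivity)

private lemma hasDerivAt_F (M B t : ℝ) (ht : 0 < t) :
    HasDerivAt (fun s : ℝ => (1/s + Real.log s - 1)*M - (s - Real.log s - 1)*B)
      ((-(1/t^2) + 1/t)*M - (1 - 1/t)*B) t := by
  have h1 : HasDerivAt (fun s : ℝ => 1/s + Real.log s - 1) (-(1/t^2) + 1/t) t := by
    have := HasDerivAt.add (by simpa [one_div] using (hasDerivAt_inv ht.ne'))
      (Real.hasDerivAt_log ht.ne')
    simpa using this.sub_const 1
  have h2 : HasDerivAt (fun s : ℝ => s - Real.log s - 1) (1 - 1/t) t := by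
    have := (hasDerivAt_id t).sub (Real.hasDerivAt_log ht.ne')
    simpa [one_div] using this.sub_const 1
  exact (h1.mul_const M).sub (h2.mul_const B)

/-- the core ratio inequality on [1, w₂]. -/
private lemma ratio_ineq {M B w₂ x : ℝ} (hB : 0 ≤ B) (hw1 : 1 < w₂)
    (hMdef : w₂ - Real.log w₂ - 1 = M) (hBdef : 1/w₂ + Real.log w₂ - 1 = B)
    (hx1 : 1 ≤ x) (hxw : x ≤ w₂) :
    (x - Real.log x - 1)*B ≤ (1/x + Real.log x - 1)*M := by
  set F : ℝ → ℝ := fun s => (1/s + Real.log s - 1)*M - (s - Real.log s - 1)*B with hF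
  have hF1 : F 1 = 0 := by simp [hF]
  have hFw : F w₂ = 0 := by rw [hF]; simp only; rw [hMdef, hBdef]; ring
  have key : 0 ≤ F x := by
    rcases le_or_gt (x*B) M with hc | hc
    · -- F monotone on [1, x]
      have mono : MonotoneOn F (Set.Icc 1 x) := by
        apply monotoneOn_of_deriv_nonneg (convex_Icc 1 x)
        · intro t ht
          exact (hasDerivAt_F M B t (by linarith [ht.1])).continuousAt.continuousWithinAt
        · intro t ht
          rw [interior_Icc] at ht
          exact (hasDerivAt_F M B t (by linarith [ht.1])).differentiableAt.differentiableWithinAt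
        · intro t ht
          rw [interior_Icc] at ht
          have ht0 : (0:ℝ) < t := by linarith [ht.1]
          rw [(hasDerivAt_F M B t ht0).deriv]
          have heq : (-(1/t^2) + 1/t)*M - (1 - 1/t)*B = ((t-1)/t^2)*(M - t*B) := by
            field_simp; ring
          rw [heq]
          have h1 : 0 ≤ (t-1)/t^2 := by
            apply div_nonneg (by linarith [ht.1]) (by positivity)
          have h2 : 0 ≤ M - t*B := by
            have : t*B ≤ x*B := mul_le_mul_of_nonneg_right (le_of_lt ht.2) hB
            linarith
          exact mul_nonneg h1 h2
      have := mono (Set.left_mem_Icc.mpr hx1) (Set.mem_Icc.mpr ⟨hx1, le_refl x⟩) hx1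
      rwa [hF1] at this
    · -- F antitone on [x, w₂]
      have anti : AntitoneOn F (Set.Icc x w₂) := by
        apply antitoneOn_of_deriv_nonpos (convex_Icc x w₂)
        · intro t ht
          exact (hasDerivAt_F M B t (by linarith [ht.1])).continuousAt.continuousWithinAt
        · intro t ht
          rw [interior_Icc] at ht
          exact (hasDerivAt_F M B t (by linarith [ht.1])).differentiableAt.differentiableWithinAt
        · intro t ht
          rw [interior_Icc] at ht
          have ht0 : (0:ℝ) < t := by linarith [ht.1]
          rw [(hasDerivAt_F M B t ht0).deriv]
          have heq : (-(1/t^2) + 1/t)*M - (1 - 1/t)*B = ((t-1)/t^2)*(M - t*B) := by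
            field_simp; ring
          rw [heq]
          have h1 : 0 ≤ (t-1)/t^2 := by
            apply div_nonneg (by linarith [ht.1]) (by positivity)
          have h2 : M - t*B ≤ 0 := by
            have : x*B ≤ t*B := mul_le_mul_of_nonneg_right (le_of_lt ht.1) hB
            linarith
          exact mul_nonpos_of_nonneg_of_nonpos h1 h2
      have := anti (Set.mem_Icc.mpr ⟨le_refl x, hxw⟩) (Set.right_mem_Icc.mpr hxw) hxw
      rwa [hFw] at this
  rw [hF] at key
  simp only at key
  linarith

/-- If Σᵢ(xᵢ - log xᵢ) ≥ n + M with all xᵢ > 0 and M > 0, then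
Σᵢ(1/xᵢ - log(1/xᵢ)) ≥ 1/w₂(M) - log(1/w₂(M)) + n - 1. -/
theorem stmt11 (n : ℕ) (hn : 1 ≤ n) (M w₂ : ℝ) (hM : 0 < M)
    (hw₂ : w₂ ∈ Set.Ioi (1 : ℝ)) (hw₂f : w₂ - Real.log w₂ = 1 + M)
    (x : Fin n → ℝ) (hx : ∀ i, 0 < x i)
    (hsum : (n : ℝ) + M ≤ ∑ i, (x i - Real.log (x i))) :
    1 / w₂ - Real.log (1 / w₂) + n - 1 ≤ ∑ i, (1 / x i - Real.log (1 / x i)) := by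
  have hw1 : (1:ℝ) < w₂ := hw₂
  have hw0 : (0:ℝ) < w₂ := by linarith
  set B : ℝ := 1/w₂ + Real.log w₂ - 1 with hBdef
  have hMdef : w₂ - Real.log w₂ - 1 = M := by linarith
  have hB : 0 < B := by
    have := Real.log_lt_sub_one_of_pos (show (0:ℝ) < 1/w₂ by positivity)
      (by intro h; rw [div_eq_one_iff_eq hw0.ne'] at h; linarith)
    rw [one_div, Real.log_inv] at this
    simp only [hBdef]
    rw [one_div]
    linarith
  have hBM : B ≤ M := by
    have := two_log_le hw1.le
    simp only [hBdef]
    linarith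
  -- rewrite goal: log(1/t) = - log t
  have hgoal : ∀ t : ℝ, 0 < t → 1/t - Real.log (1/t) = 1/t + Real.log t := by
    intro t ht; rw [one_div, Real.log_inv]; ring
  rw [hgoal w₂ hw0]
  have hsums : ∑ i, (1 / x i - Real.log (1 / x i)) = ∑ i, (1/(x i) + Real.log (x i)) := by
    apply Finset.sum_congr rfl
    intro i _
    exact hgoal (x i) (hx i)
  rw [hsums]
  -- split on whether some x i ≥ w₂
  by_cases hcase : ∃ i, w₂ ≤ x i
  · obtain ⟨i, hi⟩ := hcase
    have hterm : B ≤ 1/(x i) + Real.log (x i) - 1 := by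
      have := g_mono (Set.mem_Ici.mpr hw1.le) (Set.mem_Ici.mpr (hw1.le.trans hi)) hi
      simp only [hBdef]
      linarith
    have hsplit : ∑ j, (1/(x j) + Real.log (x j)) =
        (∑ j, (1/(x j) + Real.log (x j) - 1)) + n := by
      rw [Finset.sum_sub_distrib]
      simp [Finset.card_univ]
    rw [hsplit]
    have hsingle : (1/(x i) + Real.log (x i) - 1) ≤ ∑ j, (1/(x j) + Real.log (x j) - 1) := by
      apply Finset.single_le_sum (f := fun j => 1/(x j) + Real.log (x j) - 1)
      · intro j _
        have := g_ge_one (hx j)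
        linarith
      · exact Finset.mem_univ i
    linarith
  · push_neg at hcase
    -- all x i < w₂ ; pointwise inequality M*(g-1) ≥ B*(f-1)
    have hpt : ∀ i, (x i - Real.log (x i) - 1)*B ≤ (1/(x i) + Real.log (x i) - 1)*M := by
      intro i
      rcases le_or_gt 1 (x i) with h1 | h1
      · exact ratio_ineq hB.le hw1 hMdef rfl h1 (hcase i).le
      · -- x i < 1 : g - 1 ≥ f - 1 ≥ 0, and B ≤ M
        have hxi := hx i
        have hfg : x i - Real.log (x i) ≤ 1/(x i) + Real.log (x i) := by
          have := two_log_le (show (1:ℝ) ≤ 1/(x i) by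
            rw [le_div_iff₀ hxi]; linarith)
          rw [one_div_one_div, one_div, Real.log_inv] at this
          rw [one_div]
          linarith
        have hf1 := f_ge_one hxi
        have h2 : (x i - Real.log (x i) - 1)*B ≤ (1/(x i) + Real.log (x i) - 1)*B :=
          mul_le_mul_of_nonneg_right (by linarith) hB.le
        have h3 : (1/(x i) + Real.log (x i) - 1)*B ≤ (1/(x i) + Real.log (x i) - 1)*M :=
          mul_le_mul_of_nonneg_left hBM (by linarith)
        linarith
    have hsum2 : B*M ≤ (∑ i, (1/(x i) + Real.log (x i) - 1)) * M := by
      calc B*M ≤ (∑ i, (x i - Real.log (x i) - 1)) * B := by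
              have : M ≤ ∑ i, (x i - Real.log (x i) - 1) := by
                rw [Finset.sum_sub_distrib]
                simp only [Finset.sum_const, Finset.card_univ, Fintype.card_fin, nsmul_eq_mul,
                  mul_one]
                linarith
              nlinarith
        _ ≤ (∑ i, (1/(x i) + Real.log (x i) - 1)) * M := by
              rw [Finset.sum_mul, Finset.sum_mul]
              exact Finset.sum_le_sum (fun i _ => hpt i)
    have hfin : B ≤ ∑ i, (1/(x i) + Real.log (x i) - 1) :=
      le_of_mul_le_mul_right hsum2 hM
    have hsplit : ∑ j, (1/(x j) + Real.log (x j)) =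
        (∑ j, (1/(x j) + Real.log (x j) - 1)) + n := by
      rw [Finset.sum_sub_distrib]
      simp [Finset.card_univ]
    rw [hsplit]
    simp only [hBdef] at hfin
    linarith
end

section
/- Let μ ∈ ℝⁿ and Σ be a symmetric positive definite n×n matrix. If KL(N(μ,Σ) ∥ N(0,I)) = (1/2)(-log det Σ + tr Σ + μᵀμ - n) ≤ ε for ε > 0, then KL(N(0,I) ∥ N(μ,Σ)) = (1/2)(log det Σ + tr Σ⁻¹ + μᵀΣ⁻¹μ - n) ≤ (1/2)(1/w₁(2ε) - log(1/w₁(2ε)) - 1), where w₁(2ε) ∈ (0,1) is the smaller solution of x - log x = 1 + 2ε. -/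
open Real Set

private lemma glog_nonneg {x : ℝ} (hx : 0 < x) : 0 ≤ x - Real.log x - 1 := by
  have := Real.log_le_sub_one_of_pos hx; linarith

/-- q(w) = 1/w - w + 2 log w ≥ 0 on (0,1]. -/
private lemma q_nonneg {w : ℝ} (hw : 0 < w) (hw1 : w ≤ 1) :
    0 ≤ w⁻¹ - w + 2 * Real.log w := by
  have hanti : AntitoneOn (fun x : ℝ => x⁻¹ - x + 2 * Real.log x) (Ioi 0) := by
    apply antitoneOn_of_hasDerivWithinAt_nonpos (convex_Ioi 0)
      (f' := fun x => -(x^2)⁻¹ - 1 + 2 * x⁻¹)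
    · intro x hx
      exact (((hasDerivAt_inv (ne_of_gt hx)).sub (hasDerivAt_id x)).add
        ((Real.hasDerivAt_log (ne_of_gt hx)).const_mul 2)).continuousAt.continuousWithinAt
    · intro x hx
      rw [interior_Ioi] at hx
      exact ((((hasDerivAt_inv (ne_of_gt hx)).sub (hasDerivAt_id x)).add
        ((Real.hasDerivAt_log (ne_of_gt hx)).const_mul 2)).hasDerivWithinAt).congr_deriv
        (by ring)
    · intro x hx
      rw [interior_Ioi] at hx
      have h1 : x * x⁻¹ = 1 := mul_inv_cancel₀ (ne_of_gt hx)
      have h2 : (x^2)⁻¹ = x⁻¹ * x⁻¹ := by rw [sq, mul_inv]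
      nlinarith [sq_nonneg (x⁻¹ - 1)]
  have := hanti (mem_Ioi.mpr hw) (mem_Ioi.mpr one_pos) hw1
  simp only [Real.log_one, inv_one] at this
  linarith

/-- g is strictly antitone on (0,1]. -/
private lemma g_strictAnti : StrictAntiOn (fun x : ℝ => x - Real.log x - 1) (Ioc 0 1) := by
  apply strictAntiOn_of_hasDerivWithinAt_neg (convex_Ioc 0 1) (f' := fun x => 1 - x⁻¹)
  · intro x hx
    exact (((hasDerivAt_id x).sub (Real.hasDerivAt_log (ne_of_gt hx.1))).sub_const
      1).continuousAt.continuousWithinAt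
  · intro x hx
    rw [interior_Ioc] at hx
    exact ((((hasDerivAt_id x).sub (Real.hasDerivAt_log (ne_of_gt hx.1))).sub_const
      1).hasDerivWithinAt).congr_deriv (by ring)
  · intro x hx
    rw [interior_Ioc] at hx
    have : 1 < x⁻¹ := (one_lt_inv₀ hx.1).mpr hx.2
    linarith

/-- Claim A: for c ≥ 1 and λ ≥ 1/c, h(λ) ≤ c g(λ). -/
private lemma claimA {c lam : ℝ} (hc : 1 ≤ c) (hlam : 0 < lam) (hcl : c⁻¹ ≤ lam) :
    lam⁻¹ + Real.log lam - 1 ≤ c * (lam - Real.log lam - 1) := by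
  have hc0 : 0 < c := lt_of_lt_of_le one_pos hc
  set f : ℝ → ℝ := fun x => c * (x - Real.log x - 1) - (x⁻¹ + Real.log x - 1) with hf
  have hder : ∀ x : ℝ, x ≠ 0 →
      HasDerivAt f (c * (1 - x⁻¹) - (-(x^2)⁻¹ + x⁻¹)) x := by
    intro x hx
    exact ((((hasDerivAt_id x).sub (Real.hasDerivAt_log hx)).sub_const 1).const_mul c).sub
      (((hasDerivAt_inv hx).add (Real.hasDerivAt_log hx)).sub_const 1)
  have hf1 : f 1 = 0 := by simp [hf]
  have key : 0 ≤ f lam := by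
    rcases le_total lam 1 with h1 | h1
    · -- antitone on Icc c⁻¹ 1
      have hanti : AntitoneOn f (Icc c⁻¹ 1) := by
        apply antitoneOn_of_hasDerivWithinAt_nonpos (convex_Icc _ _)
          (f' := fun x => c * (1 - x⁻¹) - (-(x^2)⁻¹ + x⁻¹))
        · intro x hx
          have hx0 : 0 < x := lt_of_lt_of_le (inv_pos.mpr hc0) hx.1
          exact (hder x (ne_of_gt hx0)).continuousAt.continuousWithinAt
        · intro x hx
          rw [interior_Icc] at hx
          have hx0 : 0 < x := lt_of_lt_of_le (inv_pos.mpr hc0) hx.1.le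
          exact (hder x (ne_of_gt hx0)).hasDerivWithinAt
        · intro x hx
          rw [interior_Icc] at hx
          have hx0 : 0 < x := lt_of_lt_of_le (inv_pos.mpr hc0) hx.1.le
          have hxinv1 : 1 < x⁻¹ := (one_lt_inv₀ hx0).mpr hx.2
          have hcx : x⁻¹ < c := by
            rw [inv_lt_comm₀ hx0 hc0]; exact hx.1
          have h2 : (x^2)⁻¹ = x⁻¹ * x⁻¹ := by rw [sq, mul_inv]
          nlinarith [mul_nonneg (le_of_lt (sub_pos.mpr hxinv1)) (le_of_lt (sub_pos.mpr hcx))]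
      have := hanti ⟨hcl, h1⟩ ⟨inv_le_one_of_one_le₀ hc, le_refl 1⟩ h1
      rw [hf1] at this; linarith
    · -- monotone on Ici 1
      have hmono : MonotoneOn f (Ici 1) := by
        apply monotoneOn_of_hasDerivWithinAt_nonneg (convex_Ici _)
          (f' := fun x => c * (1 - x⁻¹) - (-(x^2)⁻¹ + x⁻¹))
        · intro x hx
          have hx0 : 0 < x := lt_of_lt_of_le one_pos hx
          exact (hder x (ne_of_gt hx0)).continuousAt.continuousWithinAt
        · intro x hx
          rw [interior_Ici] at hx
          have hx0 : 0 < x := lt_trans one_pos hx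
          exact (hder x (ne_of_gt hx0)).hasDerivWithinAt
        · intro x hx
          rw [interior_Ici] at hx
          have hx0 : 0 < x := lt_trans one_pos hx
          have hxinv1 : x⁻¹ < 1 := (inv_lt_one₀ hx0).mpr hx
          have hcx : x⁻¹ ≤ c := le_trans hxinv1.le hc
          have h2 : (x^2)⁻¹ = x⁻¹ * x⁻¹ := by rw [sq, mul_inv]
          nlinarith [mul_nonneg (sub_nonneg.mpr hxinv1.le) (sub_nonneg.mpr hcx)]
      have := hmono (mem_Ici.mpr (le_refl 1)) (mem_Ici.mpr h1) h1
      rw [hf1] at this; linarith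
  simp only [hf] at key; linarith

/-- Claim B: on [w,1], h(λ) + (2ε - g(λ))/λ ≤ h(w), where g(w) = 2ε. -/
private lemma claimB {ε w lam : ℝ} (hw : 0 < w)
    (hwf : w - Real.log w - 1 = 2 * ε) (hlw : w ≤ lam) (hl1 : lam ≤ 1) :
    lam⁻¹ + Real.log lam - 1 + (2 * ε - (lam - Real.log lam - 1)) * lam⁻¹ ≤
      w⁻¹ + Real.log w - 1 := by
  set F : ℝ → ℝ := fun x => x⁻¹ + Real.log x - 1 + (2 * ε - (x - Real.log x - 1)) * x⁻¹
    with hF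
  have hder : ∀ x : ℝ, x ≠ 0 → HasDerivAt F
      ((-(x^2)⁻¹ + x⁻¹) + ((-(1 - x⁻¹)) * x⁻¹ + (2 * ε - (x - Real.log x - 1)) * (-(x^2)⁻¹))) x := by
    intro x hx
    exact (((hasDerivAt_inv hx).add (Real.hasDerivAt_log hx)).sub_const 1).add
      ((((hasDerivAt_const x (2*ε)).sub
        (((hasDerivAt_id x).sub (Real.hasDerivAt_log hx)).sub_const 1)).congr_deriv
          (by ring)).mul (hasDerivAt_inv hx))
  have hanti : AntitoneOn F (Icc w 1) := by
    apply antitoneOn_of_hasDerivWithinAt_nonpos (convex_Icc _ _)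
      (f' := fun x => (-(x^2)⁻¹ + x⁻¹) +
        ((-(1 - x⁻¹)) * x⁻¹ + (2 * ε - (x - Real.log x - 1)) * (-(x^2)⁻¹)))
    · intro x hx
      have hx0 : 0 < x := lt_of_lt_of_le hw hx.1
      exact (hder x (ne_of_gt hx0)).continuousAt.continuousWithinAt
    · intro x hx
      rw [interior_Icc] at hx
      have hx0 : 0 < x := lt_of_lt_of_le hw hx.1.le
      exact (hder x (ne_of_gt hx0)).hasDerivWithinAt
    · intro x hx
      rw [interior_Icc] at hx
      have hx0 : 0 < x := lt_of_lt_of_le hw hx.1.le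
      have hg : x - Real.log x - 1 ≤ 2 * ε := by
        rw [← hwf]
        exact (g_strictAnti ⟨hw, le_trans hlw hl1⟩ ⟨hx0, hx.2.le⟩ hx.1).le
      have h2 : (x^2)⁻¹ = x⁻¹ * x⁻¹ := by rw [sq, mul_inv]
      have hxinv : 0 ≤ (x^2)⁻¹ := by positivity
      nlinarith [mul_nonneg (sub_nonneg.mpr hg) hxinv]
  have := hanti ⟨le_refl w, le_trans hlw hl1⟩ ⟨hlw, hl1⟩ hlw
  have hFw : F w = w⁻¹ + Real.log w - 1 := by
    simp only [hF, hwf]; ring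
  rw [hFw] at this
  exact this

/-- Per-term inequality with slope c = h(w)/(2ε). -/
private lemma perterm {ε w c lam u : ℝ} (hε : 0 < ε) (hw : 0 < w) (hw1 : w < 1)
    (hwf : w - Real.log w - 1 = 2 * ε)
    (hc : c = (w⁻¹ + Real.log w - 1) / (2 * ε))
    (hlam : 0 < lam) (hu : 0 ≤ u) (hbud : lam - Real.log lam - 1 + u ≤ 2 * ε) :
    lam⁻¹ + Real.log lam - 1 + u / lam ≤ c * (lam - Real.log lam - 1 + u) := by
  have h2e : 0 < 2 * ε := by linarith
  have hq := q_nonneg hw hw1.le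
  have hhw : 2 * ε ≤ w⁻¹ + Real.log w - 1 := by rw [← hwf]; linarith
  have hc1 : 1 ≤ c := by
    rw [hc]; rw [le_div_iff₀ h2e]; linarith
  have hc0 : 0 < c := lt_of_lt_of_le one_pos hc1
  have hc2e : c * (2 * ε) = w⁻¹ + Real.log w - 1 := by
    rw [hc]; field_simp
  have hg0 : 0 ≤ lam - Real.log lam - 1 := glog_nonneg hlam
  rcases le_or_gt c⁻¹ lam with hcase | hcase
  · -- h(lam) ≤ c g(lam) and u/lam ≤ c u
    have hA := claimA hc1 hlam hcase
    have hinvc : lam⁻¹ ≤ c := by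
      rw [inv_le_comm₀ hlam hc0] at *; exact hcase
    have : u / lam ≤ c * u := by
      rw [div_eq_mul_inv]
      calc u * lam⁻¹ ≤ u * c := by exact mul_le_mul_of_nonneg_left hinvc hu
        _ = c * u := mul_comm _ _
    linarith
  · -- lam < c⁻¹ ≤ 1, so lam ∈ [w, 1)
    have hl1 : lam < 1 := lt_of_lt_of_le hcase (inv_le_one_of_one_le₀ hc1)
    have hlw : w ≤ lam := by
      by_contra hcon
      push_neg at hcon
      have := g_strictAnti ⟨hlam, hl1.le⟩ ⟨hw, hw1.le⟩ hcon
      simp only at this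
      rw [hwf] at this
      linarith
    have hB := claimB hw hwf hlw hl1.le
    have hcl : c < lam⁻¹ := by
      have := (inv_lt_inv₀ (inv_pos.mpr hc0) hlam).mpr hcase
      rwa [inv_inv] at this
    have hum : u ≤ 2 * ε - (lam - Real.log lam - 1) := by linarith
    have hmul : u * (lam⁻¹ - c) ≤ (2 * ε - (lam - Real.log lam - 1)) * (lam⁻¹ - c) :=
      mul_le_mul_of_nonneg_right hum (by linarith)
    rw [div_eq_mul_inv]
    nlinarith [hmul, hB, hc2e]

/-- The key summed inequality. -/
private lemma key_sum {N : Type*} [Fintype N] (lam m : N → ℝ) (hlam : ∀ i, 0 < lam i)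
    {ε w : ℝ} (hε : 0 < ε) (hw : 0 < w) (hw1 : w < 1)
    (hwf : w - Real.log w - 1 = 2 * ε)
    (h : ∑ i, (lam i - Real.log (lam i) - 1 + m i ^ 2) ≤ 2 * ε) :
    ∑ i, ((lam i)⁻¹ + Real.log (lam i) - 1 + m i ^ 2 / lam i) ≤ w⁻¹ + Real.log w - 1 := by
  have h2e : 0 < 2 * ε := by linarith
  set c : ℝ := (w⁻¹ + Real.log w - 1) / (2 * ε) with hc
  have hq := q_nonneg hw hw1.le
  have hhw : 2 * ε ≤ w⁻¹ + Real.log w - 1 := by rw [← hwf]; linarith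
  have hc1 : 1 ≤ c := by rw [hc, le_div_iff₀ h2e]; linarith
  have hc0 : 0 ≤ c := le_trans zero_le_one hc1
  have hterm_nonneg : ∀ i, 0 ≤ lam i - Real.log (lam i) - 1 + m i ^ 2 := fun i => by
    have := glog_nonneg (hlam i); positivity
  have hbud : ∀ i, lam i - Real.log (lam i) - 1 + m i ^ 2 ≤ 2 * ε := fun i => by
    calc lam i - Real.log (lam i) - 1 + m i ^ 2
        ≤ ∑ j, (lam j - Real.log (lam j) - 1 + m j ^ 2) :=
          Finset.single_le_sum (fun j _ => hterm_nonneg j) (Finset.mem_univ i)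
      _ ≤ 2 * ε := h
  calc ∑ i, ((lam i)⁻¹ + Real.log (lam i) - 1 + m i ^ 2 / lam i)
      ≤ ∑ i, c * (lam i - Real.log (lam i) - 1 + m i ^ 2) := by
        apply Finset.sum_le_sum
        intro i _
        exact perterm hε hw hw1 hwf hc (hlam i) (sq_nonneg _) (hbud i)
    _ = c * ∑ i, (lam i - Real.log (lam i) - 1 + m i ^ 2) := by rw [Finset.mul_sum]
    _ ≤ c * (2 * ε) := mul_le_mul_of_nonneg_left h hc0
    _ = w⁻¹ + Real.log w - 1 := by rw [hc]; field_simp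

open Matrix

/-- If KL(N(μ,Σ) ∥ N(0,I)) ≤ ε, then
KL(N(0,I) ∥ N(μ,Σ)) ≤ (1/2)(1/w₁(2ε) - log(1/w₁(2ε)) - 1). -/
theorem stmt12 (n : ℕ) (μ : Fin n → ℝ) (S : Matrix (Fin n) (Fin n) ℝ)
    (hS : S.PosDef) (ε w₁ : ℝ) (hε : 0 < ε)
    (hw₁ : w₁ ∈ Set.Ioo (0 : ℝ) 1) (hw₁f : w₁ - Real.log w₁ = 1 + 2 * ε)
    (hKL : (1/2) * (-Real.log S.det + S.trace + μ ⬝ᵥ μ - n) ≤ ε) :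
    (1/2) * (Real.log S.det + (S⁻¹).trace + μ ⬝ᵥ (S⁻¹).mulVec μ - n) ≤
      (1/2) * (1 / w₁ - Real.log (1 / w₁) - 1) := by
  obtain ⟨hw0, hw1lt⟩ := hw₁
  have hH : S.IsHermitian := hS.1
  set U : Matrix (Fin n) (Fin n) ℝ :=
    (Matrix.IsHermitian.eigenvectorUnitary hH : Matrix (Fin n) (Fin n) ℝ) with hU
  set lam : Fin n → ℝ := hH.eigenvalues with hlamdef
  have hlam : ∀ i, 0 < lam i := hS.eigenvalues_pos
  have hlamne : ∀ i, lam i ≠ 0 := fun i => ne_of_gt (hlam i)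
  have hUU : star U * U = 1 := Unitary.coe_star_mul_self _
  have hUU' : U * star U = 1 := Unitary.coe_mul_star_self _
  have hspec : S = U * Matrix.diagonal lam * star U := by
    have h := hH.spectral_theorem
    refine h.trans ?_
    rw [Unitary.conjStarAlgAut_apply]
    rfl
  set E : Matrix (Fin n) (Fin n) ℝ := Matrix.diagonal (fun i => (lam i)⁻¹) with hE
  have hDE : Matrix.diagonal lam * E = 1 := by
    rw [hE, Matrix.diagonal_mul_diagonal]
    convert Matrix.diagonal_one with i
    exact mul_inv_cancel₀ (hlamne i)
  have hSinv : S⁻¹ = U * E * star U := by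
    apply Matrix.inv_eq_right_inv
    rw [hspec]
    calc U * Matrix.diagonal lam * star U * (U * E * star U)
        = U * Matrix.diagonal lam * (star U * U) * E * star U := by
          simp only [Matrix.mul_assoc]
      _ = U * (Matrix.diagonal lam * E) * star U := by rw [hUU]; simp only [Matrix.mul_assoc, Matrix.one_mul]
      _ = 1 := by rw [hDE, Matrix.mul_one, hUU']
  -- traces
  have htrS : S.trace = ∑ i, lam i := by
    rw [hspec, Matrix.trace_mul_cycle, hUU, Matrix.one_mul]
    simp [Matrix.trace, Matrix.diag]
  have htrSinv : (S⁻¹).trace = ∑ i, (lam i)⁻¹ := by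
    rw [hSinv, Matrix.trace_mul_cycle, hUU, Matrix.one_mul]
    simp [Matrix.trace, Matrix.diag, hE]
  -- determinant
  have hdet : Real.log S.det = ∑ i, Real.log (lam i) := by
    have h := hH.det_eq_prod_eigenvalues
    have h2 : S.det = ∏ i, lam i := by
      rw [h]; simp [RCLike.ofReal_real_eq_id]; rfl
    rw [h2, Real.log_prod (fun i _ => hlamne i)]
  -- quadratic forms
  have hstarT : star U = Uᵀ := by
    rw [Matrix.star_eq_conjTranspose, Matrix.conjTranspose_eq_transpose_of_trivial]
  set v : Fin n → ℝ := star U *ᵥ μ with hv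
  have hdot : ∀ y : Fin n → ℝ, μ ⬝ᵥ (U *ᵥ y) = v ⬝ᵥ y := by
    intro y
    rw [Matrix.dotProduct_mulVec]
    congr 1
    rw [hv, hstarT, Matrix.mulVec_transpose]
  have hμμ : μ ⬝ᵥ μ = ∑ i, v i ^ 2 := by
    have h1 : μ ⬝ᵥ μ = v ⬝ᵥ v := by
      calc μ ⬝ᵥ μ = μ ⬝ᵥ ((U * star U) *ᵥ μ) := by rw [hUU', Matrix.one_mulVec]
        _ = μ ⬝ᵥ (U *ᵥ (star U *ᵥ μ)) := by rw [Matrix.mulVec_mulVec]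
        _ = v ⬝ᵥ v := hdot _
    rw [h1]
    simp [dotProduct, sq]
  have hquad : μ ⬝ᵥ (S⁻¹).mulVec μ = ∑ i, v i ^ 2 / lam i := by
    have h1 : (S⁻¹).mulVec μ = U *ᵥ (E *ᵥ v) := by
      rw [hSinv, hv, ← Matrix.mulVec_mulVec, ← Matrix.mulVec_mulVec]
    rw [h1, hdot]
    simp only [dotProduct, hE, Matrix.mulVec_diagonal]
    congr 1
    ext i
    rw [sq]
    field_simp
  -- assemble
  have hwf' : w₁ - Real.log w₁ - 1 = 2 * ε := by linarith
  have hn : (n : ℝ) = ∑ _i : Fin n, (1 : ℝ) := by simp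
  have hsum : ∑ i, (lam i - Real.log (lam i) - 1 + v i ^ 2) ≤ 2 * ε := by
    have e1 : ∑ i, (lam i - Real.log (lam i) - 1 + v i ^ 2)
        = (∑ i, lam i) - (∑ i, Real.log (lam i)) - (∑ _i : Fin n, (1:ℝ))
          + ∑ i, v i ^ 2 := by
      rw [Finset.sum_add_distrib, Finset.sum_sub_distrib, Finset.sum_sub_distrib]
    rw [e1, ← hn]
    rw [hdet, htrS, hμμ] at hKL
    linarith
  have hkey := key_sum lam v hlam hε hw0 hw1lt hwf' hsum
  have e2 : ∑ i, ((lam i)⁻¹ + Real.log (lam i) - 1 + v i ^ 2 / lam i)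
      = (∑ i, (lam i)⁻¹) + (∑ i, Real.log (lam i)) - (∑ _i : Fin n, (1:ℝ))
        + ∑ i, v i ^ 2 / lam i := by
    rw [Finset.sum_add_distrib, Finset.sum_sub_distrib, Finset.sum_add_distrib]
  rw [e2, ← hn] at hkey
  rw [hdet, htrSinv, hquad]
  rw [show (1:ℝ)/w₁ = w₁⁻¹ from one_div w₁, Real.log_inv]
  linarith
end

section
/- Let μ ∈ ℝⁿ and Σ be symmetric positive definite. If KL(N(0,I) ∥ N(μ,Σ)) = (1/2)(log det Σ + tr Σ⁻¹ + μᵀΣ⁻¹μ - n) ≤ ε for ε > 0, then KL(N(μ,Σ) ∥ N(0,I)) = (1/2)(-log det Σ + tr Σ + μᵀμ - n) ≤ (1/2)(1/w₁(2ε) - log(1/w₁(2ε)) - 1), with w₁(2ε) the smaller solution of x - log x = 1 + 2ε. -/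
open Matrix


noncomputable def gf (x : ℝ) : ℝ := x - Real.log x - 1

lemma gf_nonneg {x : ℝ} (hx : 0 < x) : 0 ≤ gf x := by
  have := Real.log_le_sub_one_of_pos hx
  unfold gf; linarith

lemma gf_one : gf 1 = 0 := by simp [gf]

lemma hasDerivAt_gf {x : ℝ} (hx : x ≠ 0) : HasDerivAt gf (1 - x⁻¹) x := by
  unfold gf; simpa using ((hasDerivAt_id x).sub (Real.hasDerivAt_log hx)).sub_const 1

lemma gf_inv (x : ℝ) : gf x⁻¹ = x⁻¹ + Real.log x - 1 := by
  unfold gf; rw [Real.log_inv]; ring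

lemma hasDerivAt_gf_inv {x : ℝ} (hx : x ≠ 0) :
    HasDerivAt (fun y => gf y⁻¹) ((x - 1) / x ^ 2) x := by
  have h : HasDerivAt (fun y : ℝ => y⁻¹ + Real.log y - 1) ((x-1)/x^2) x := by
    have := ((hasDerivAt_inv hx).add (Real.hasDerivAt_log hx)).sub_const 1
    refine this.congr_deriv ?_
    field_simp
    ring
  exact h.congr_of_eventuallyEq (by filter_upwards with y using gf_inv y)

/-- helper: monotone on from HasDerivAt -/
lemma monoOn_help {f f' : ℝ → ℝ} {D : Set ℝ} (hD : Convex ℝ D)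
    (hd : ∀ x ∈ D, HasDerivAt f (f' x) x) (h0 : ∀ x ∈ interior D, 0 ≤ f' x) :
    MonotoneOn f D := by
  apply monotoneOn_of_deriv_nonneg hD
  · exact fun x hx => (hd x hx).continuousAt.continuousWithinAt
  · exact fun x hx => ((hd x (interior_subset hx)).differentiableAt).differentiableWithinAt
  · exact fun x hx => by rw [(hd x (interior_subset hx)).deriv]; exact h0 x hx

lemma antiOn_help {f f' : ℝ → ℝ} {D : Set ℝ} (hD : Convex ℝ D)
    (hd : ∀ x ∈ D, HasDerivAt f (f' x) x) (h0 : ∀ x ∈ interior D, f' x ≤ 0) :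
    AntitoneOn f D := by
  apply antitoneOn_of_deriv_nonpos hD
  · exact fun x hx => (hd x hx).continuousAt.continuousWithinAt
  · exact fun x hx => ((hd x (interior_subset hx)).differentiableAt).differentiableWithinAt
  · exact fun x hx => by rw [(hd x (interior_subset hx)).deriv]; exact h0 x hx

lemma gf_monoOn : MonotoneOn gf (Set.Ici 1) := by
  apply monoOn_help (convex_Ici 1) (fun x hx => hasDerivAt_gf (by have : (1:ℝ) ≤ x := hx; linarith))
  intro x hx
  rw [interior_Ici] at hx
  have h1 : (1:ℝ) < x := hx
  have : x⁻¹ ≤ 1 := by rw [inv_le_one_iff₀]; right; linarith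
  linarith

lemma gf_antiOn : AntitoneOn gf (Set.Ioc 0 1) := by
  apply antiOn_help (convex_Ioc 0 1)
    (fun x hx => hasDerivAt_gf (ne_of_gt hx.1))
  intro x hx
  rw [interior_Ioc] at hx
  have h0 : (0:ℝ) < x := hx.1
  have h1 : x < 1 := hx.2
  have : 1 ≤ x⁻¹ := (one_le_inv_iff₀).2 ⟨h0, le_of_lt h1⟩
  linarith

/-- L2: g(1/y) ≤ g(y) for y ≥ 1 -/
lemma gf_inv_le {y : ℝ} (hy : 1 ≤ y) : gf y⁻¹ ≤ gf y := by
  have hy0 : 0 < y := by linarith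
  -- φ t = t - t⁻¹ - 2 log t monotone on Ici 1
  have hmono : MonotoneOn (fun t : ℝ => t - t⁻¹ - 2 * Real.log t) (Set.Ici 1) := by
    apply monoOn_help (convex_Ici 1)
      (f' := fun t => 1 + (t⁻¹)^2 - 2 * t⁻¹)
    · intro t ht
      have ht0 : t ≠ 0 := by have : (1:ℝ) ≤ t := ht; positivity
      have := ((hasDerivAt_id t).sub (hasDerivAt_inv ht0)).sub
        ((Real.hasDerivAt_log ht0).const_mul 2)
      refine this.congr_deriv ?_
      field_simp <;> ring
    · intro t ht
      have h1 : (1:ℝ) < t := by rwa [interior_Ici] at ht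
      have : (0:ℝ) ≤ (1 - t⁻¹)^2 := sq_nonneg _
      nlinarith [this]
  have := hmono (Set.mem_Ici.2 le_rfl) (Set.mem_Ici.2 hy) hy
  simp only [inv_one, Real.log_one] at this
  rw [gf_inv, gf]
  linarith

lemma gf_strictAntiOn : StrictAntiOn gf (Set.Ioc 0 1) := by
  apply strictAntiOn_of_deriv_neg (convex_Ioc 0 1)
  · exact fun t ht => (hasDerivAt_gf (ne_of_gt ht.1)).continuousAt.continuousWithinAt
  · intro t ht
    rw [interior_Ioc] at ht
    rw [(hasDerivAt_gf (ne_of_gt ht.1)).deriv]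
    have : 1 < t⁻¹ := (one_lt_inv_iff₀).2 ⟨ht.1, ht.2⟩
    linarith

/-- L3: w * gf(1/w) ≤ gf w for w ∈ (0,1] -/
lemma L3 {w : ℝ} (hw0 : 0 < w) (hw1 : w ≤ 1) : w * gf w⁻¹ ≤ gf w := by
  have hmono : MonotoneOn (fun t : ℝ => 2 - 2*t + (1+t)*Real.log t) (Set.Ioc 0 1) := by
    apply monoOn_help (convex_Ioc 0 1) (f' := fun t => gf t⁻¹)
    · intro t ht
      have ht0 : t ≠ 0 := ne_of_gt ht.1
      have := ((hasDerivAt_const t 2).sub ((hasDerivAt_id t).const_mul 2)).add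
        (((hasDerivAt_id t).const_add 1).mul (Real.hasDerivAt_log ht0))
      refine this.congr_deriv ?_
      rw [gf_inv, id]
      field_simp <;> ring
    · intro t ht
      rw [interior_Ioc] at ht
      exact gf_nonneg (inv_pos.2 ht.1)
  have := hmono (Set.mem_Ioc.2 ⟨hw0, hw1⟩) (Set.mem_Ioc.2 ⟨one_pos, le_rfl⟩) hw1
  simp only [Real.log_one] at this
  have hml := Real.log_nonpos (le_of_lt hw0) hw1
  rw [gf_inv, gf]
  have hww : w * w⁻¹ = 1 := mul_inv_cancel₀ (ne_of_gt hw0)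
  nlinarith [this]

/-- L4 -/
lemma L4 {w x : ℝ} (hw0 : 0 < w) (hw1 : w ≤ 1) (hx : w ≤ x) (hx1 : x ≤ 1) :
    gf w * gf x⁻¹ ≤ gf w⁻¹ * gf x := by
  set A := gf w⁻¹ with hA
  set B := gf w with hB
  have hx0 : 0 < x := lt_of_lt_of_le hw0 hx
  have hB0 : 0 ≤ B := gf_nonneg hw0
  have hBA : B ≤ A := by
    have := gf_inv_le (y := w⁻¹) ((one_le_inv_iff₀).2 ⟨hw0, hw1⟩)
    rwa [inv_inv] at this
  have hA0 : 0 ≤ A := le_trans hB0 hBA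
  rcases eq_or_lt_of_le hA0 with hA0' | hA0'
  · have hBz : B = 0 := le_antisymm (by linarith) hB0
    rw [hBz, ← hA0']
    simp
  -- x* = B/A
  have hxs1 : B / A ≤ 1 := (div_le_one hA0').2 hBA
  have hxsw : w ≤ B / A := (le_div_iff₀ hA0').2 (L3 hw0 hw1)
  set P : ℝ → ℝ := fun t => A * gf t - B * gf t⁻¹ with hP
  have hPd : ∀ t : ℝ, t ≠ 0 → HasDerivAt P ((t - 1) * (A * t - B) / t ^ 2) t := by
    intro t ht0
    have := ((hasDerivAt_gf ht0).const_mul A).sub ((hasDerivAt_gf_inv ht0).const_mul B)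
    refine this.congr_deriv ?_
    field_simp <;> ring
  have hP1 : P 1 = 0 := by simp [hP, gf_one]
  have hPw : P w = 0 := by rw [hP]; ring
  have key : 0 ≤ P x := by
    rcases le_total x (B / A) with hc | hc
    · -- monotone on [w, B/A]
      have hmono : MonotoneOn P (Set.Icc w (B/A)) := by
        apply monoOn_help (convex_Icc _ _)
          (f' := fun t => (t - 1) * (A * t - B) / t ^ 2)
        · exact fun t ht => hPd t (ne_of_gt (lt_of_lt_of_le hw0 ht.1))
        · intro t ht
          rw [interior_Icc] at ht
          have ht0 : 0 < t := lt_of_lt_of_le hw0 ht.1.le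
          have h1 : t - 1 ≤ 0 := by linarith [lt_of_lt_of_le ht.2 hxs1]
          have h2 : A * t - B ≤ 0 := by
            have := (le_div_iff₀ hA0').1 (le_of_lt ht.2)
            nlinarith
          have hnum : 0 ≤ (t - 1) * (A * t - B) := by nlinarith
          exact div_nonneg hnum (sq_nonneg t)
      have := hmono (Set.mem_Icc.2 ⟨le_rfl, hxsw⟩) (Set.mem_Icc.2 ⟨hx, hc⟩) hx
      linarith [hPw ▸ this]
    · -- antitone on [B/A, 1]
      have hanti : AntitoneOn P (Set.Icc (B/A) 1) := by
        apply antiOn_help (convex_Icc _ _)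
          (f' := fun t => (t - 1) * (A * t - B) / t ^ 2)
        · exact fun t ht => hPd t (ne_of_gt (lt_of_lt_of_le (lt_of_lt_of_le hw0 hxsw) ht.1))
        · intro t ht
          rw [interior_Icc] at ht
          have ht0 : 0 < t := lt_of_lt_of_le hw0 (le_trans hxsw ht.1.le)
          have h1 : t - 1 ≤ 0 := by linarith [ht.2]
          have h2 : 0 ≤ A * t - B := by
            have := (div_le_iff₀ hA0').1 (le_of_lt ht.1)
            nlinarith
          have hnum : (t - 1) * (A * t - B) ≤ 0 := mul_nonpos_of_nonpos_of_nonneg h1 h2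
          have ht2 : (0:ℝ) < t ^ 2 := by positivity
          exact div_nonpos_of_nonpos_of_nonneg hnum ht2.le
      have := hanti (Set.mem_Icc.2 ⟨hc, hx1⟩) (Set.mem_Icc.2 ⟨hxs1, le_rfl⟩) hx1
      linarith [hP1 ▸ this]
  rw [hP] at key
  linarith

/-- L5 -/
lemma L5 {w x : ℝ} (hw0 : 0 < w) (hw1 : w ≤ 1) (hx : w ≤ x) (hgx : gf x ≤ gf w) :
    x * gf x⁻¹ + (gf w - gf x) ≤ x * gf w⁻¹ := by
  set A := gf w⁻¹ with hA
  set Q : ℝ → ℝ := fun t => t * A - t * gf t⁻¹ - gf w + gf t with hQ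
  have hQd : ∀ t : ℝ, t ≠ 0 → HasDerivAt Q (A - gf t⁻¹) t := by
    intro t ht0
    have key : HasDerivAt Q (1 * A - (1 * gf t⁻¹ + t * ((t - 1) / t ^ 2)) + (1 - t⁻¹)) t :=
      ((((hasDerivAt_id t).mul_const A).sub
        ((hasDerivAt_id t).mul (hasDerivAt_gf_inv ht0))).sub_const (gf w)).add
        (hasDerivAt_gf ht0)
    convert key using 1
    field_simp <;> ring
  have hQw : Q w = 0 := by rw [hQ]; ring
  have hmono : MonotoneOn Q (Set.Icc w x) := by
    apply monoOn_help (convex_Icc _ _) (f' := fun t => A - gf t⁻¹)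
    · exact fun t ht => hQd t (ne_of_gt (lt_of_lt_of_le hw0 ht.1))
    · intro t ht
      rw [interior_Icc] at ht
      have ht0 : 0 < t := lt_of_lt_of_le hw0 ht.1.le
      have hAw : gf w ≤ A := by
        have := gf_inv_le (y := w⁻¹) ((one_le_inv_iff₀).2 ⟨hw0, hw1⟩)
        rwa [inv_inv] at this
      rcases le_total t 1 with ht1 | ht1
      · -- t ≤ 1 : 1 ≤ t⁻¹ ≤ w⁻¹
        have h1 : (1:ℝ) ≤ t⁻¹ := (one_le_inv_iff₀).2 ⟨ht0, ht1⟩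
        have h2 : t⁻¹ ≤ w⁻¹ := by
          apply inv_anti₀ hw0 ht.1.le
        have := gf_monoOn (Set.mem_Ici.2 h1) (Set.mem_Ici.2 (le_trans h1 h2)) h2
        linarith
      · -- 1 ≤ t
        have h1 : gf t⁻¹ ≤ gf t := gf_inv_le ht1
        have h2 : gf t ≤ gf x := gf_monoOn (Set.mem_Ici.2 ht1)
          (Set.mem_Ici.2 (le_trans ht1 ht.2.le)) ht.2.le
        linarith
  have := hmono (Set.mem_Icc.2 ⟨le_rfl, hx⟩) (Set.mem_Icc.2 ⟨hx, le_rfl⟩) hx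
  rw [hQw] at this
  rw [hQ] at this
  simp only at this
  linarith

/-- Lemma A: the per-coordinate inequality -/
lemma lemA {w x q : ℝ} (hw0 : 0 < w) (hw1 : w ≤ 1) (hgw : 0 < gf w)
    (hx : 0 < x) (hq : 0 ≤ q) (hb : gf x + q ≤ gf w) :
    gf x⁻¹ + q * x⁻¹ ≤ gf w⁻¹ / gf w * (gf x + q) := by
  set κ := gf w⁻¹ / gf w with hκ
  have hAw : gf w ≤ gf w⁻¹ := by
    have := gf_inv_le (y := w⁻¹) ((one_le_inv_iff₀).2 ⟨hw0, hw1⟩)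
    rwa [inv_inv] at this
  have hκ1 : 1 ≤ κ := (one_le_div hgw).2 hAw
  have hκgw : κ * gf w = gf w⁻¹ := div_mul_cancel₀ _ (ne_of_gt hgw)
  -- x ≥ w
  have hwx : w ≤ x := by
    by_contra hc
    push_neg at hc
    have h1 : gf w < gf x := gf_strictAntiOn (Set.mem_Ioc.2 ⟨hx, by linarith⟩)
      (Set.mem_Ioc.2 ⟨hw0, hw1⟩) hc
    linarith
  rcases le_total x⁻¹ κ with hc | hc
  · -- small coefficient case: bound q/x ≤ q κ and gf x⁻¹ ≤ κ gf x
    have hgfx : gf x⁻¹ ≤ κ * gf x := by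
      rcases le_total x 1 with hx1 | hx1
      · have := L4 hw0 hw1 hwx hx1
        rw [hκ, div_mul_eq_mul_div, le_div_iff₀ hgw, mul_comm (gf x⁻¹) (gf w)]
        linarith [this]
      · have h1 : gf x⁻¹ ≤ gf x := gf_inv_le hx1
        nlinarith [gf_nonneg hx, hκ1]
    have : q * x⁻¹ ≤ q * κ := mul_le_mul_of_nonneg_left hc hq
    nlinarith
  · -- large coefficient case: use q ≤ gf w - gf x and L5
    have hqb : q ≤ gf w - gf x := by linarith
    have h5 := L5 hw0 hw1 hwx (by linarith [gf_nonneg hx])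
    -- gf x⁻¹ + (gf w - gf x) * x⁻¹ ≤ gf w⁻¹
    have h5' : gf x⁻¹ + (gf w - gf x) * x⁻¹ ≤ gf w⁻¹ := by
      have hxne : x ≠ 0 := ne_of_gt hx
      rw [← mul_le_mul_iff_right₀ hx]
      calc x * (gf x⁻¹ + (gf w - gf x) * x⁻¹) = x * gf x⁻¹ + (gf w - gf x) * (x * x⁻¹) := by ring
        _ = x * gf x⁻¹ + (gf w - gf x) := by rw [mul_inv_cancel₀ hxne, mul_one]
        _ ≤ x * gf w⁻¹ := h5
    -- LHS - κ(gf x + q) = (gf x⁻¹ - κ gf x) + q (x⁻¹ - κ) ≤ ... ≤ 0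
    have hstep : gf x⁻¹ + q * x⁻¹ - κ * (gf x + q)
        ≤ gf x⁻¹ + (gf w - gf x) * x⁻¹ - κ * gf w := by
      have : q * (x⁻¹ - κ) ≤ (gf w - gf x) * (x⁻¹ - κ) :=
        mul_le_mul_of_nonneg_right hqb (by linarith)
      nlinarith
    rw [hκgw] at hstep
    linarith

/-- sum version -/
lemma sum_bound {n : ℕ} {w : ℝ} (hw0 : 0 < w) (hw1 : w ≤ 1) (hgw : 0 < gf w)
    (x q : Fin n → ℝ) (hx : ∀ i, 0 < x i) (hq : ∀ i, 0 ≤ q i)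
    (hb : ∑ i, (gf (x i) + q i) ≤ gf w) :
    ∑ i, (gf (x i)⁻¹ + q i * (x i)⁻¹) ≤ gf w⁻¹ := by
  have hκ0 : 0 ≤ gf w⁻¹ / gf w := div_nonneg (gf_nonneg (by positivity)) hgw.le
  have hterm : ∀ i, 0 ≤ gf (x i) + q i := fun i => add_nonneg (gf_nonneg (hx i)) (hq i)
  have hbi : ∀ i : Fin n, gf (x i) + q i ≤ gf w := by
    intro i
    calc gf (x i) + q i ≤ ∑ j, (gf (x j) + q j) :=
          Finset.single_le_sum (fun j _ => hterm j) (Finset.mem_univ i)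
      _ ≤ gf w := hb
  calc ∑ i, (gf (x i)⁻¹ + q i * (x i)⁻¹)
      ≤ ∑ i, gf w⁻¹ / gf w * (gf (x i) + q i) :=
        Finset.sum_le_sum fun i _ => lemA hw0 hw1 hgw (hx i) (hq i) (hbi i)
    _ = gf w⁻¹ / gf w * ∑ i, (gf (x i) + q i) := (Finset.mul_sum _ _ _).symm
    _ ≤ gf w⁻¹ / gf w * gf w := mul_le_mul_of_nonneg_left hb hκ0
    _ = gf w⁻¹ := div_mul_cancel₀ _ (ne_of_gt hgw)


section MatLemmas
variable {n : ℕ} {U : Matrix (Fin n) (Fin n) ℝ}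

lemma conj_trace (hU : U ∈ Matrix.unitaryGroup (Fin n) ℝ) (d : Fin n → ℝ) :
    (U * diagonal d * star U).trace = ∑ i, d i := by
  rw [trace_mul_cycle, mem_unitaryGroup_iff'.mp hU, one_mul, trace_diagonal]

lemma conj_quad (d : Fin n → ℝ) (μ : Fin n → ℝ) :
    μ ⬝ᵥ (U * diagonal d * star U) *ᵥ μ = ∑ i, d i * ((μ ᵥ* U) i) ^ 2 := by
  rw [← mulVec_mulVec, ← mulVec_mulVec, dotProduct_mulVec,
    star_eq_conjTranspose, conjTranspose_eq_transpose_of_trivial, mulVec_transpose]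
  simp only [dotProduct, mulVec_diagonal]
  exact Finset.sum_congr rfl fun i _ => by ring

lemma conj_det (hU : U ∈ Matrix.unitaryGroup (Fin n) ℝ) (d : Fin n → ℝ) :
    (U * diagonal d * star U).det = ∏ i, d i := by
  have h2 : (star U).det * U.det = 1 := by
    rw [← det_mul, mem_unitaryGroup_iff'.mp hU, det_one]
  rw [det_mul, det_mul, det_diagonal]
  linear_combination (∏ i, d i) * h2

lemma conj_inv' (hU : U ∈ Matrix.unitaryGroup (Fin n) ℝ) {d : Fin n → ℝ}
    (hd : ∀ i, d i ≠ 0) :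
    (U * diagonal d * star U)⁻¹ = U * diagonal (fun i => (d i)⁻¹) * star U := by
  apply inv_eq_right_inv
  have h1 : star U * U = 1 := mem_unitaryGroup_iff'.mp hU
  have h2 : U * star U = 1 := mem_unitaryGroup_iff.mp hU
  have h3 : diagonal d * diagonal (fun i => (d i)⁻¹) = 1 := by
    rw [diagonal_mul_diagonal]
    have he : (fun i => d i * (d i)⁻¹) = fun _ => (1:ℝ) :=
      funext fun i => mul_inv_cancel₀ (hd i)
    rw [he, diagonal_one]
  have assoc : (U * diagonal d * star U) * (U * diagonal (fun i => (d i)⁻¹) * star U)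
      = U * diagonal d * (star U * U) * diagonal (fun i => (d i)⁻¹) * star U := by
    simp only [Matrix.mul_assoc]
  rw [assoc, h1, Matrix.mul_one, Matrix.mul_assoc U, h3, Matrix.mul_one, h2]

end MatLemmas


/-- If KL(N(0,I) ∥ N(μ,Σ)) ≤ ε, then
KL(N(μ,Σ) ∥ N(0,I)) ≤ (1/2)(1/w₁(2ε) - log(1/w₁(2ε)) - 1). -/
theorem stmt13 (n : ℕ) (μ : Fin n → ℝ) (S : Matrix (Fin n) (Fin n) ℝ)
    (hS : S.PosDef) (ε w₁ : ℝ) (hε : 0 < ε)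
    (hw₁ : w₁ ∈ Set.Ioo (0 : ℝ) 1) (hw₁f : w₁ - Real.log w₁ = 1 + 2 * ε)
    (hKL : (1/2) * (Real.log S.det + (S⁻¹).trace + μ ⬝ᵥ (S⁻¹).mulVec μ - n) ≤ ε) :
    (1/2) * (-Real.log S.det + S.trace + μ ⬝ᵥ μ - n) ≤
      (1/2) * (1 / w₁ - Real.log (1 / w₁) - 1) := by
  obtain ⟨hw0, hw1⟩ := hw₁
  have hH : S.IsHermitian := hS.1
  set e : Fin n → ℝ := hH.eigenvalues with he
  have hepos : ∀ i, 0 < e i := fun i => hS.eigenvalues_pos i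
  set U : Matrix (Fin n) (Fin n) ℝ := (hH.eigenvectorUnitary : Matrix (Fin n) (Fin n) ℝ)
    with hUdef
  have hU : U ∈ Matrix.unitaryGroup (Fin n) ℝ := hH.eigenvectorUnitary.2
  have hspec : S = U * diagonal e * star U := by
    have := hH.spectral_theorem
    rwa [RCLike.ofReal_real_eq_id, Function.id_comp] at this
  set v : Fin n → ℝ := μ ᵥ* U with hv
  -- basic quantities
  have hSinv : S⁻¹ = U * diagonal (fun i => (e i)⁻¹) * star U := by
    rw [hspec]; exact conj_inv' hU (fun i => (hepos i).ne')
  have htr : S.trace = ∑ i, e i := by rw [hspec]; exact conj_trace hU e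
  have htrinv : S⁻¹.trace = ∑ i, (e i)⁻¹ := by rw [hSinv]; exact conj_trace hU _
  have hlogdet : Real.log S.det = ∑ i, Real.log (e i) := by
    rw [hspec, conj_det hU e]
    exact Real.log_prod (fun i _ => (hepos i).ne')
  have hquadinv : μ ⬝ᵥ S⁻¹ *ᵥ μ = ∑ i, (e i)⁻¹ * v i ^ 2 := by
    rw [hSinv]; exact conj_quad _ μ
  have hμμ : μ ⬝ᵥ μ = ∑ i, v i ^ 2 := by
    have h1 : U * diagonal (fun _ : Fin n => (1:ℝ)) * star U = 1 := by
      rw [diagonal_one, Matrix.mul_one]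
      exact mem_unitaryGroup_iff.mp hU
    have h2 := conj_quad (U := U) (fun _ : Fin n => (1:ℝ)) μ
    rw [h1, one_mulVec] at h2
    simpa using h2
  -- scalar setup
  have hgw : gf w₁ = 2 * ε := by unfold gf; linarith
  have hgw0 : 0 < gf w₁ := by rw [hgw]; linarith
  -- the budget
  have hb : ∑ i, (gf ((e i)⁻¹) + (e i)⁻¹ * v i ^ 2) ≤ gf w₁ := by
    have hsum : ∑ i, (gf ((e i)⁻¹) + (e i)⁻¹ * v i ^ 2)
        = (∑ i, (e i)⁻¹) + (∑ i, Real.log (e i)) - n + ∑ i, (e i)⁻¹ * v i ^ 2 := by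
      rw [Finset.sum_add_distrib]
      congr 1
      have hterm : ∀ i : Fin n, gf ((e i)⁻¹) = (e i)⁻¹ + Real.log (e i) - 1 :=
        fun i => gf_inv (e i)
      rw [Finset.sum_congr rfl (fun i _ => hterm i), Finset.sum_sub_distrib,
        Finset.sum_add_distrib]
      simp [Finset.card_univ]
    rw [hsum, hgw, ← htrinv, ← hlogdet, ← hquadinv]
    linarith [hKL]
  -- apply the main scalar bound
  have key := sum_bound hw0 hw1.le hgw0 (fun i => (e i)⁻¹) (fun i => (e i)⁻¹ * v i ^ 2)
    (fun i => inv_pos.2 (hepos i)) (fun i => by have := hepos i; positivity) hb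
  -- rewrite the conclusion sum
  have hsum2 : ∑ i, (gf (((e i)⁻¹)⁻¹) + ((e i)⁻¹ * v i ^ 2) * ((e i)⁻¹)⁻¹)
      = (∑ i, e i) - (∑ i, Real.log (e i)) - n + ∑ i, v i ^ 2 := by
    have hterm : ∀ i : Fin n, gf (((e i)⁻¹)⁻¹) + ((e i)⁻¹ * v i ^ 2) * ((e i)⁻¹)⁻¹
        = (e i - Real.log (e i) - 1) + v i ^ 2 := by
      intro i
      rw [inv_inv]
      unfold gf
      have h0 : e i ≠ 0 := (hepos i).ne'
      field_simp
    rw [Finset.sum_congr rfl (fun i _ => hterm i), Finset.sum_add_distrib,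
      Finset.sum_sub_distrib, Finset.sum_sub_distrib]
    simp [Finset.card_univ]
  rw [hsum2] at key
  -- final arithmetic
  have hrhs : gf w₁⁻¹ = 1 / w₁ - Real.log (1 / w₁) - 1 := by
    rw [gf_inv, one_div, Real.log_inv]
    ring
  rw [hlogdet, htr, hμμ]
  rw [← hrhs]
  linarith [key]
end

section
/- For all ε ≥ 0, w₂(ε) - 1 ≥ 1 - w₁(ε), with equality iff ε = 0, where w₁(ε) ∈ (0,1] and w₂(ε) ∈ [1,∞) are the two positive solutions of x - log x = 1 + ε. -/
lemma aux_f_mono : StrictMonoOn (fun x : ℝ => x - Real.log x) (Set.Ici 1) := by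
  have hder : ∀ t ∈ Set.Ici (1:ℝ), HasDerivAt (fun x : ℝ => x - Real.log x) (1 - 1/t) t := by
    intro t ht
    have ht0 : t ≠ 0 := by have : (1:ℝ) ≤ t := ht; linarith
    exact ((hasDerivAt_id' t).sub (Real.hasDerivAt_log ht0)).congr_deriv (by simp)
  apply strictMonoOn_of_deriv_pos (convex_Ici 1)
  · exact fun t ht => (hder t ht).continuousAt.continuousWithinAt
  · intro t ht
    rw [interior_Ici] at ht
    rw [(hder t (Set.mem_Ici.mpr (le_of_lt ht))).deriv]
    have htpos : (0:ℝ) < t := lt_trans one_pos (Set.mem_Ioi.mp ht)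
    have : 1/t < 1 := by
      rw [div_lt_one htpos]; exact Set.mem_Ioi.mp ht
    linarith

lemma aux_key (x : ℝ) (hx0 : 0 < x) (hx1 : x < 1) :
    2 - 2*x < Real.log (2 - x) - Real.log x := by
  set F : ℝ → ℝ := fun t => Real.log (2 - t) - Real.log t + 2*t with hF
  have hder : ∀ t ∈ Set.Ioc (0:ℝ) 1, HasDerivAt F (-(1/(2-t)) - 1/t + 2) t := by
    intro t ht
    have ht0 : t ≠ 0 := ne_of_gt ht.1
    have h2t : (2:ℝ) - t ≠ 0 := by have := ht.2; intro h; linarith [ht.2]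
    have h1 : HasDerivAt (fun t : ℝ => Real.log (2 - t)) (-(1/(2-t))) t := by
      have hc : HasDerivAt (fun t : ℝ => 2 - t) (-1) t := by
        exact ((hasDerivAt_const t (2:ℝ)).sub (hasDerivAt_id' t)).congr_deriv (by simp)
      have := (Real.hasDerivAt_log h2t).comp t hc
      exact this.congr_deriv (by ring)
    have h2 : HasDerivAt (fun t : ℝ => Real.log t) (1/t) t := by
      simpa using Real.hasDerivAt_log ht0
    have h3 : HasDerivAt (fun t : ℝ => 2*t) 2 t := by
      simpa using (hasDerivAt_id t).const_mul (2:ℝ)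
    exact (h1.sub h2).add h3
  have hanti : StrictAntiOn F (Set.Ioc (0:ℝ) 1) := by
    apply strictAntiOn_of_deriv_neg (convex_Ioc 0 1)
    · exact fun t ht => (hder t ht).continuousAt.continuousWithinAt
    · intro t ht
      rw [interior_Ioc] at ht
      obtain ⟨ht0, ht1⟩ := ht
      rw [(hder t ⟨ht0, le_of_lt ht1⟩).deriv]
      have h2t : (0:ℝ) < 2 - t := by linarith
      have heq : -(1/(2-t)) - 1/t + 2 = -(2*(t-1)^2/(t*(2-t))) := by
        field_simp; ring
      rw [heq]
      have hnum : 0 < 2*(t-1)^2 := by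
        have hne : t - 1 ≠ 0 := sub_ne_zero.mpr (ne_of_lt ht1)
        positivity
      have : 0 < 2*(t-1)^2/(t*(2-t)) := div_pos hnum (by positivity)
      linarith
  have h1 : F 1 < F x := hanti ⟨hx0, le_of_lt hx1⟩ ⟨one_pos, le_refl 1⟩ hx1
  simp only [hF] at h1
  norm_num at h1
  linarith

/-- For ε ≥ 0, w₂(ε) - 1 ≥ 1 - w₁(ε), with equality iff ε = 0. -/
theorem stmt17 (ε w₁ w₂ : ℝ) (hε : 0 ≤ ε)
    (hw₁ : w₁ ∈ Set.Ioc (0 : ℝ) 1) (hw₁f : w₁ - Real.log w₁ = 1 + ε)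
    (hw₂ : w₂ ∈ Set.Ici (1 : ℝ)) (hw₂f : w₂ - Real.log w₂ = 1 + ε) :
    1 - w₁ ≤ w₂ - 1 ∧ (w₂ - 1 = 1 - w₁ ↔ ε = 0) := by
  obtain ⟨hw₁0, hw₁1⟩ := hw₁
  rcases eq_or_lt_of_le hw₁1 with heq | hlt
  · -- w₁ = 1
    subst heq
    simp at hw₁f
    have hε0 : ε = 0 := by linarith
    subst hε0
    have hw₂1 : w₂ = 1 := by
      by_contra hne
      have h1 : (1:ℝ) < w₂ := lt_of_le_of_ne hw₂ (Ne.symm hne)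
      have := aux_f_mono (Set.self_mem_Ici) hw₂ h1
      simp at this
      linarith
    subst hw₂1
    norm_num
  · -- w₁ < 1
    have hεpos : 0 < ε := by
      rcases eq_or_lt_of_le hε with h | h
      · exfalso
        have := Real.log_lt_sub_one_of_pos hw₁0 (ne_of_lt hlt)
        linarith
      · exact h
    have hkey := aux_key w₁ hw₁0 hlt
    -- f(2 - w₁) < f(w₂)
    have hf2 : (2 - w₁) - Real.log (2 - w₁) < w₂ - Real.log w₂ := by
      rw [hw₂f, ← hw₁f]; linarith
    have hmem : (2 - w₁) ∈ Set.Ici (1:ℝ) := by simp; linarith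
    have hlt2 : 2 - w₁ < w₂ := by
      by_contra hle
      push_neg at hle
      have := aux_f_mono.le_iff_le hw₂ hmem |>.mpr hle
      linarith
    refine ⟨by linarith, ?_, ?_⟩
    · intro h; linarith
    · intro h; exfalso; linarith
end

section
/- Let εₓ, ε_y ≥ 0 and suppose x, y > 0 satisfy x - log x ≤ 1 + εₓ and y - log y ≤ 1 + ε_y. Then xy - log(xy) ≤ w₂(εₓ)·w₂(ε_y) - log(w₂(εₓ)·w₂(ε_y)), where w₂(t) ∈ [1,∞) is the larger solution of s - log s = 1 + t. -/
open Real

/-- f is strictly monotone on [1, ∞). -/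
lemma stmt18_strict_mono {a b : ℝ} (ha : 1 ≤ a) (hab : a < b) :
    a - Real.log a < b - Real.log b := by
  have ha0 : 0 < a := lt_of_lt_of_le one_pos ha
  have hb0 : 0 < b := lt_trans ha0 hab
  have h1 : Real.log b - Real.log a < b / a - 1 := by
    rw [← Real.log_div hb0.ne' ha0.ne']
    refine Real.log_lt_sub_one_of_pos (div_pos hb0 ha0) ?_
    intro hEq
    rw [div_eq_one_iff_eq ha0.ne'] at hEq
    exact hab.ne' hEq
  have h2 : b / a - 1 ≤ b - a := by
    rw [div_sub' ha0.ne', div_le_iff₀ ha0]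
    nlinarith
  linarith

/-- f is strictly antitone on (0, 1]. -/
lemma stmt18_strict_anti {a b : ℝ} (ha : 0 < a) (hab : a < b) (hb : b ≤ 1) :
    b - Real.log b < a - Real.log a := by
  have hb0 : 0 < b := lt_trans ha hab
  have h1 : Real.log a - Real.log b < a / b - 1 := by
    rw [← Real.log_div ha.ne' hb0.ne']
    refine Real.log_lt_sub_one_of_pos (div_pos ha hb0) ?_
    intro hEq
    rw [div_eq_one_iff_eq hb0.ne'] at hEq
    exact hab.ne hEq
  have h2 : a / b - 1 ≤ a - b := by
    rw [div_sub' hb0.ne', div_le_iff₀ hb0]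
    nlinarith
  linarith

lemma stmt18_g_deriv {u : ℝ} (hu0 : 0 < u) (hu2 : u < 2) :
    HasDerivAt (fun v : ℝ => Real.log (2 - v) - Real.log v + 2 * v)
      (-(2 - u)⁻¹ - u⁻¹ + 2) u := by
  have h1 : HasDerivAt (fun v : ℝ => Real.log (2 - v)) (-(2 - u)⁻¹) u := by
    have hd : HasDerivAt (fun v : ℝ => 2 - v) (-1 : ℝ) u := by
      simpa using (hasDerivAt_id u).const_sub (2:ℝ)
    have := hd.log (by linarith : (2:ℝ) - u ≠ 0)
    convert this using 1
    ring
  have h2 : HasDerivAt (fun v : ℝ => Real.log v) u⁻¹ u :=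
    Real.hasDerivAt_log hu0.ne'
  have h3 : HasDerivAt (fun v : ℝ => 2 * v) (2 : ℝ) u := by
    simpa using (hasDerivAt_id u).const_mul (2:ℝ)
  exact (h1.sub h2).add h3

/-- The auxiliary function g(v) = log(2-v) - log v + 2v is antitone on (0,1]. -/
lemma stmt18_g_anti : AntitoneOn (fun v : ℝ => Real.log (2 - v) - Real.log v + 2 * v)
    (Set.Ioc (0:ℝ) 1) := by
  apply antitoneOn_of_deriv_nonpos (convex_Ioc (0:ℝ) 1)
  · intro v hv
    apply ContinuousAt.continuousWithinAt
    have hv0 : (0:ℝ) < v := hv.1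
    have hv2 : v < 2 := lt_of_le_of_lt hv.2 (by norm_num)
    have hc1 : ContinuousAt (fun v : ℝ => Real.log (2 - v)) v :=
      (Real.continuousAt_log (by linarith)).comp
        ((continuous_const.sub continuous_id).continuousAt)
    have hc2 : ContinuousAt (fun v : ℝ => Real.log v) v :=
      Real.continuousAt_log hv0.ne'
    exact (hc1.sub hc2).add (continuous_const.mul continuous_id).continuousAt
  · rw [interior_Ioc]
    intro v hv
    exact ((stmt18_g_deriv hv.1 (by linarith [hv.2])).differentiableAt).differentiableWithinAt
  · rw [interior_Ioc]
    intro v hv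
    have hv0 : (0:ℝ) < v := hv.1
    have hv1 : v < 1 := hv.2
    rw [(stmt18_g_deriv hv0 (by linarith)).deriv]
    have h20 : (0:ℝ) < 2 - v := by linarith
    have key : -(2 - v)⁻¹ - v⁻¹ + 2 = -((v - 1)^2 * 2 / (v * (2 - v))) := by
      field_simp
      ring
    rw [key, neg_nonpos]
    positivity

/-- f(2-s) ≤ f(s) for 0 < s ≤ 1. -/
lemma stmt18_two_sub {s : ℝ} (hs : 0 < s) (hs1 : s ≤ 1) :
    (2 - s) - Real.log (2 - s) ≤ s - Real.log s := by
  have h := stmt18_g_anti (Set.mem_Ioc.2 ⟨hs, hs1⟩) (Set.mem_Ioc.2 ⟨one_pos, le_refl 1⟩) hs1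
  simp only at h
  -- h : log(2-1) - log 1 + 2*1 ≤ log(2-s) - log s + 2*s
  have h1 : Real.log (2 - 1 : ℝ) = 0 := by norm_num
  rw [h1, Real.log_one] at h
  linarith

/-- If f(x) ≤ f(w) with x > 0 and w ≥ 1, then x ≤ w. -/
lemma stmt18_upper {x w : ℝ} (hx : 0 < x) (hw : 1 ≤ w)
    (h : x - Real.log x ≤ w - Real.log w) : x ≤ w := by
  by_contra hc
  push_neg at hc
  exact absurd h (not_le.2 (stmt18_strict_mono hw hc))

/-- If f(x) ≤ f(w) with x > 0 and w ≥ 1, then 2 - w ≤ x. -/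
lemma stmt18_lower {x w : ℝ} (hx : 0 < x) (hw : 1 ≤ w)
    (h : x - Real.log x ≤ w - Real.log w) : 2 - w ≤ x := by
  rcases le_or_gt 1 x with h1 | h1
  · linarith
  · by_contra hc
    push_neg at hc
    have h2w1 : 2 - w ≤ 1 := by linarith
    have hstrict : (2 - w) - Real.log (2 - w) < x - Real.log x :=
      stmt18_strict_anti hx hc h2w1
    have htwo : w - Real.log w ≤ (2 - w) - Real.log (2 - w) := by
      have := stmt18_two_sub (s := 2 - w) (by linarith) h2w1
      have h22 : (2 : ℝ) - (2 - w) = w := by ring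
      rwa [h22] at this
    linarith

/-- If x - log x ≤ 1 + εₓ and y - log y ≤ 1 + ε_y, then
xy - log(xy) ≤ w₂(εₓ)w₂(ε_y) - log(w₂(εₓ)w₂(ε_y)). -/
theorem stmt18 (εx εy x y wx wy : ℝ) (hεx : 0 ≤ εx) (hεy : 0 ≤ εy)
    (hx : 0 < x) (hy : 0 < y)
    (hxf : x - Real.log x ≤ 1 + εx) (hyf : y - Real.log y ≤ 1 + εy)
    (hwx : wx ∈ Set.Ici (1 : ℝ)) (hwxf : wx - Real.log wx = 1 + εx)
    (hwy : wy ∈ Set.Ici (1 : ℝ)) (hwyf : wy - Real.log wy = 1 + εy) :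
    x * y - Real.log (x * y) ≤ wx * wy - Real.log (wx * wy) := by
  have hwx1 : 1 ≤ wx := hwx
  have hwy1 : 1 ≤ wy := hwy
  have hwx0 : 0 < wx := lt_of_lt_of_le one_pos hwx1
  have hwy0 : 0 < wy := lt_of_lt_of_le one_pos hwy1
  have hxw : x - Real.log x ≤ wx - Real.log wx := by rw [hwxf]; exact hxf
  have hyw : y - Real.log y ≤ wy - Real.log wy := by rw [hwyf]; exact hyf
  have hx_le : x ≤ wx := stmt18_upper hx hwx1 hxw
  have hy_le : y ≤ wy := stmt18_upper hy hwy1 hyw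
  have hx_ge : 2 - wx ≤ x := stmt18_lower hx hwx1 hxw
  have hy_ge : 2 - wy ≤ y := stmt18_lower hy hwy1 hyw
  have habx : |x - 1| ≤ wx - 1 := abs_le.2 ⟨by linarith, by linarith⟩
  have haby : |y - 1| ≤ wy - 1 := abs_le.2 ⟨by linarith, by linarith⟩
  have key : (x - 1) * (y - 1) ≤ (wx - 1) * (wy - 1) :=
    calc (x - 1) * (y - 1) ≤ |(x - 1) * (y - 1)| := le_abs_self _
      _ = |x - 1| * |y - 1| := abs_mul _ _
      _ ≤ (wx - 1) * (wy - 1) :=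
          mul_le_mul habx haby (abs_nonneg _) (by linarith)
  rw [Real.log_mul hx.ne' hy.ne', Real.log_mul hwx0.ne' hwy0.ne']
  nlinarith [hxw, hyw, key]
end

section
/- Let ε_{x,1} ≥ ε_{x,2} ≥ 0 and ε_{y,1} ≥ ε_{y,2} ≥ 0, and for t ≥ 0 let w₂(t) ∈ [1,∞) be the larger solution of s - log s = 1 + t. Then f(w₂(ε_{x,1})·w₂(ε_{y,1})) + f(w₂(ε_{x,2})·w₂(ε_{y,2})) ≤ f(w₂(ε_{x,1}+ε_{x,2})·w₂(ε_{y,1}+ε_{y,2})) + 1, where f(s) = s - log s. -/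
open Real Set

noncomputable def phi (h : ℝ) : ℝ := h - Real.log (1 + h)

lemma phi_hasDeriv {h : ℝ} (hh : 0 < h) :
    HasDerivAt phi (1 - 1/(1+h)) h := by
  have h1 : (1:ℝ) + h ≠ 0 := by positivity
  have := ((hasDerivAt_id h).const_add 1).log h1
  have h3 : HasDerivAt (fun y => Real.log (1 + y)) (1/(1+h)) h := by simpa using this
  exact (hasDerivAt_id h).sub h3

lemma phi_strictMono : StrictMonoOn phi (Ici (0:ℝ)) := by
  apply strictMonoOn_of_deriv_pos (convex_Ici 0)
  · apply ContinuousOn.sub continuousOn_id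
    apply ContinuousOn.log (by fun_prop)
    intro x hx; simp at hx; positivity
  · intro x hx
    rw [interior_Ici] at hx
    simp only [mem_Ioi] at hx
    rw [(phi_hasDeriv hx).deriv]
    have : 1/(1+x) < 1 := by
      rw [div_lt_one (by positivity)]; linarith
    linarith

noncomputable def g (u : ℝ) : ℝ := phi (Real.sqrt u)

lemma g_deriv {u : ℝ} (hu : 0 < u) :
    HasDerivAt g (1/(2*(1 + Real.sqrt u))) u := by
  have hs : 0 < Real.sqrt u := Real.sqrt_pos.2 hu
  have h1 := (phi_hasDeriv hs).comp u (Real.hasDerivAt_sqrt hu.ne')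
  refine h1.congr_deriv ?_
  have h2 : (1:ℝ) + Real.sqrt u ≠ 0 := by positivity
  field_simp
  ring

lemma g_concave : ConcaveOn ℝ (Ici (0:ℝ)) g := by
  apply AntitoneOn.concaveOn_of_deriv (convex_Ici 0)
  · apply ContinuousOn.sub Real.continuous_sqrt.continuousOn
    apply ContinuousOn.log (by fun_prop)
    intro x hx; simp at hx
    have := Real.sqrt_nonneg x; positivity
  · rw [interior_Ici]
    intro x hx
    exact (g_deriv hx).differentiableAt.differentiableWithinAt
  · rw [interior_Ici]
    intro x hx y hy hxy
    rw [(g_deriv hx).deriv, (g_deriv hy).deriv]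
    have hsx : 0 < 1 + Real.sqrt x := by have := Real.sqrt_nonneg x; linarith
    have hsy : 0 < 1 + Real.sqrt y := by have := Real.sqrt_nonneg y; linarith
    apply div_le_div_of_nonneg_left (by norm_num) (by linarith)
    have := Real.sqrt_le_sqrt hxy
    linarith

lemma g_zero : g 0 = 0 := by simp [g, phi]

lemma g_subadd {x y : ℝ} (hx : 0 ≤ x) (hy : 0 ≤ y) : g (x + y) ≤ g x + g y := by
  rcases eq_or_lt_of_le (by linarith : (0:ℝ) ≤ x + y) with h | h
  · simp [← h, g_zero]
    have hx0 : x = 0 := by linarith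
    have hy0 : y = 0 := by linarith
    simp [hx0, hy0, g_zero]
  · have hA : g x ≥ (x/(x+y)) * g (x+y) := by
      have := g_concave.2 (mem_Ici.2 le_rfl) (mem_Ici.2 (by linarith : (0:ℝ) ≤ x + y))
        (by positivity : (0:ℝ) ≤ y/(x+y)) (by positivity : (0:ℝ) ≤ x/(x+y))
        (by field_simp; ring)
      have e : (y/(x+y)) • (0:ℝ) + (x/(x+y)) • (x+y) = x := by
        simp only [smul_eq_mul]; field_simp; ring
      rw [e] at this
      simpa [g_zero] using this
    have hB : g y ≥ (y/(x+y)) * g (x+y) := by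
      have := g_concave.2 (mem_Ici.2 le_rfl) (mem_Ici.2 (by linarith : (0:ℝ) ≤ x + y))
        (by positivity : (0:ℝ) ≤ x/(x+y)) (by positivity : (0:ℝ) ≤ y/(x+y))
        (by field_simp)
      have e : (x/(x+y)) • (0:ℝ) + (y/(x+y)) • (x+y) = y := by
        simp only [smul_eq_mul]; field_simp; ring
      rw [e] at this
      simpa [g_zero] using this
    have : (x/(x+y)) * g (x+y) + (y/(x+y)) * g (x+y) = g (x+y) := by
      field_simp
    linarith

/-- key: if φ H = φ x + φ y with everything nonneg, then x² + y² ≤ H². -/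
lemma key_sq {x y H : ℝ} (hx : 0 ≤ x) (hy : 0 ≤ y) (hH : 0 ≤ H)
    (h : phi H = phi x + phi y) : x^2 + y^2 ≤ H^2 := by
  have h1 : phi (Real.sqrt (x^2 + y^2)) ≤ phi x + phi y := by
    have := g_subadd (by positivity : (0:ℝ) ≤ x^2) (by positivity : (0:ℝ) ≤ y^2)
    simpa [g, Real.sqrt_sq hx, Real.sqrt_sq hy] using this
  rw [← h] at h1
  have hs : Real.sqrt (x^2 + y^2) ≤ H := by
    by_contra hc
    push_neg at hc
    exact absurd (phi_strictMono (mem_Ici.2 hH)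
      (mem_Ici.2 (Real.sqrt_nonneg _)) hc) (not_lt.2 h1)
  calc x^2 + y^2 = Real.sqrt (x^2+y^2)^2 := (Real.sq_sqrt (by positivity)).symm
    _ ≤ H^2 := by nlinarith [Real.sqrt_nonneg (x^2+y^2)]

lemma cs_step {h1 h2 k1 k2 H K : ℝ} (hh1 : 0 ≤ h1) (hh2 : 0 ≤ h2)
    (hk1 : 0 ≤ k1) (hk2 : 0 ≤ k2) (hHn : 0 ≤ H) (hKn : 0 ≤ K)
    (hH : h1^2 + h2^2 ≤ H^2) (hK : k1^2 + k2^2 ≤ K^2) :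
    h1 * k1 + h2 * k2 ≤ H * K := by
  nlinarith [sq_nonneg (h1*k2 - h2*k1), sq_nonneg (H - K), sq_nonneg (H + K),
    mul_nonneg hHn hKn, mul_nonneg hh1 hk1, mul_nonneg hh2 hk2]

/-- For ε_{x,1} ≥ ε_{x,2} ≥ 0 and ε_{y,1} ≥ ε_{y,2} ≥ 0,
f(w₂(ε_{x,1})w₂(ε_{y,1})) + f(w₂(ε_{x,2})w₂(ε_{y,2}))
  ≤ f(w₂(ε_{x,1}+ε_{x,2})w₂(ε_{y,1}+ε_{y,2})) + 1, where f(s) = s - log s. -/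
theorem stmt19 (w₂ : ℝ → ℝ)
    (hw₂ : ∀ t : ℝ, 0 ≤ t → w₂ t ∈ Set.Ici (1 : ℝ) ∧ w₂ t - Real.log (w₂ t) = 1 + t)
    (εx1 εx2 εy1 εy2 : ℝ)
    (hx2 : 0 ≤ εx2) (hx12 : εx2 ≤ εx1) (hy2 : 0 ≤ εy2) (hy12 : εy2 ≤ εy1) :
    (w₂ εx1 * w₂ εy1 - Real.log (w₂ εx1 * w₂ εy1)) +
      (w₂ εx2 * w₂ εy2 - Real.log (w₂ εx2 * w₂ εy2)) ≤
    (w₂ (εx1 + εx2) * w₂ (εy1 + εy2) - Real.log (w₂ (εx1 + εx2) * w₂ (εy1 + εy2))) + 1 := by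
  have hx1 : 0 ≤ εx1 := le_trans hx2 hx12
  have hy1 : 0 ≤ εy1 := le_trans hy2 hy12
  obtain ⟨ha1, ha1'⟩ := hw₂ εx1 hx1
  obtain ⟨ha2, ha2'⟩ := hw₂ εx2 hx2
  obtain ⟨hb1, hb1'⟩ := hw₂ εy1 hy1
  obtain ⟨hb2, hb2'⟩ := hw₂ εy2 hy2
  obtain ⟨hA, hA'⟩ := hw₂ (εx1 + εx2) (by linarith)
  obtain ⟨hB, hB'⟩ := hw₂ (εy1 + εy2) (by linarith)
  simp only [Set.mem_Ici] at ha1 ha2 hb1 hb2 hA hB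
  -- phi of (w - 1) equals t
  have hphi : ∀ t : ℝ, 0 ≤ t → 1 ≤ w₂ t → w₂ t - Real.log (w₂ t) = 1 + t →
      phi (w₂ t - 1) = t := by
    intro t ht hw hid
    have : (1:ℝ) + (w₂ t - 1) = w₂ t := by ring
    rw [phi, this]
    linarith
  have p1 := hphi εx1 hx1 ha1 ha1'
  have p2 := hphi εx2 hx2 ha2 ha2'
  have q1 := hphi εy1 hy1 hb1 hb1'
  have q2 := hphi εy2 hy2 hb2 hb2'
  have pA := hphi (εx1 + εx2) (by linarith) hA hA'
  have qB := hphi (εy1 + εy2) (by linarith) hB hB'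
  have keyA : (w₂ εx1 - 1)^2 + (w₂ εx2 - 1)^2 ≤ (w₂ (εx1 + εx2) - 1)^2 :=
    key_sq (by linarith) (by linarith) (by linarith) (by rw [pA, p1, p2])
  have keyB : (w₂ εy1 - 1)^2 + (w₂ εy2 - 1)^2 ≤ (w₂ (εy1 + εy2) - 1)^2 :=
    key_sq (by linarith) (by linarith) (by linarith) (by rw [qB, q1, q2])
  have cs : (w₂ εx1 - 1) * (w₂ εy1 - 1) + (w₂ εx2 - 1) * (w₂ εy2 - 1) ≤
      (w₂ (εx1 + εx2) - 1) * (w₂ (εy1 + εy2) - 1) :=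
    cs_step (by linarith) (by linarith) (by linarith) (by linarith)
      (by linarith) (by linarith) keyA keyB
  rw [Real.log_mul (by linarith) (by linarith), Real.log_mul (by linarith) (by linarith),
    Real.log_mul (by linarith) (by linarith)]
  have l1 : Real.log (w₂ εx1) = w₂ εx1 - 1 - εx1 := by linarith
  have l2 : Real.log (w₂ εx2) = w₂ εx2 - 1 - εx2 := by linarith
  have l3 : Real.log (w₂ εy1) = w₂ εy1 - 1 - εy1 := by linarith
  have l4 : Real.log (w₂ εy2) = w₂ εy2 - 1 - εy2 := by linarith
  have l5 : Real.log (w₂ (εx1 + εx2)) = w₂ (εx1 + εx2) - 1 - (εx1 + εx2) := by linarith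
  have l6 : Real.log (w₂ (εy1 + εy2)) = w₂ (εy1 + εy2) - 1 - (εy1 + εy2) := by linarith
  rw [l1, l2, l3, l4, l5, l6]
  nlinarith [cs]
end
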